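/- arXiv:math/0212135 — 7 statements merged into one kernel-verified Lean document; each statement's English description precedes it below -/
import Mathlib

section
/- Let R be a commutative ring, I and J ideals of R, and x, y elements of R forming a regular sequence on R. Then the sequence 0 → R/((I:y) ∩ (J:x)) → R/I ⊕ R/J → (x,y)/(xI + yJ) → 0 is exact, where the first map sends r to ((-ry), (rx)) and the second sends (a,b) to ax + by (all taken modulo the appropriate submodules). -/
/-!
Exactness in the middle is the vanishing of the first Koszul homology of a regular sequence:
if `a x + b y = 0` then `y b ∈ (x)`, so `b = r x` by regularity of `y` modulo `x`, and cancelling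
the nonzerodivisor `x` from `x (a + r y) = 0` gives `a = -r y`. A relation
`a x + b y = x i + y j` with `i ∈ I`, `j ∈ J` is reduced to this case by subtracting `(i, j)`.
-/

namespace Ideal

variable {R : Type*} [CommRing R]

theorem exists_eq_neg_mul_and_eq_mul_of_mul_add_mul_eq_zero {x y : R}
    (hx : x ∈ nonZeroDivisors R) (hy : ∀ r : R, y * r ∈ span {x} → r ∈ span {x})
    {a b : R} (h : a * x + b * y = 0) : ∃ r, a = -(r * y) ∧ b = r * x := by
  obtain ⟨r, hr⟩ := mem_span_singleton'.mp <| hy b <|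
    mem_span_singleton'.mpr ⟨-a, by linear_combination -h⟩
  refine ⟨r, ?_, hr.symm⟩
  have : (a + r * y) * x = 0 := by linear_combination h + y * hr
  linear_combination hx.2 _ this

theorem mem_span_singleton_mul_add_span_singleton_mul_iff {I J : Ideal R} {x y z : R} :
    z ∈ span {x} * I + span {y} * J ↔ ∃ i ∈ I, ∃ j ∈ J, x * i + y * j = z := by
  simp only [Submodule.add_eq_sup, Submodule.mem_sup, mem_span_singleton_mul]
  constructor
  · rintro ⟨_, ⟨i, hi, rfl⟩, _, ⟨j, hj, rfl⟩, rfl⟩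
    exact ⟨i, hi, j, hj, rfl⟩
  · rintro ⟨i, hi, j, hj, rfl⟩
    exact ⟨_, ⟨i, hi, rfl⟩, _, ⟨j, hj, rfl⟩, rfl⟩

variable (I J : Ideal R) (x y : R)

def negMulProdMul : R →ₗ[R] (R ⧸ I) × (R ⧸ J) :=
  (I.mkQ ∘ₗ LinearMap.toSpanSingleton R R (-y)).prod (J.mkQ ∘ₗ LinearMap.toSpanSingleton R R x)

theorem negMulProdMul_apply (r : R) :
    negMulProdMul I J x y r = (Quotient.mk I (-(r * y)), Quotient.mk J (r * x)) := by
  simp [negMulProdMul]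

theorem ker_negMulProdMul :
    LinearMap.ker (negMulProdMul I J x y) = I.colon (span {y}) ⊓ J.colon (span {x}) := by
  ext r
  simp only [LinearMap.mem_ker, negMulProdMul_apply, Prod.mk_eq_zero, Quotient.eq_zero_iff_mem,
    neg_mem_iff, Submodule.mem_inf, mem_colon_span_singleton]

def colonQuotToProd :
    R ⧸ (I.colon (span {y}) ⊓ J.colon (span {x})) →ₗ[R] (R ⧸ I) × (R ⧸ J) :=
  Submodule.liftQ _ (negMulProdMul I J x y) (ker_negMulProdMul I J x y).ge

theorem colonQuotToProd_mk (r : R) :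
    colonQuotToProd I J x y (Quotient.mk _ r) =
      (Quotient.mk I (-(r * y)), Quotient.mk J (r * x)) :=
  negMulProdMul_apply I J x y r

theorem colonQuotToProd_injective : Function.Injective (colonQuotToProd I J x y) :=
  LinearMap.ker_eq_bot.mp <| Submodule.ker_liftQ_eq_bot _ _ _ (ker_negMulProdMul I J x y).le

theorem left_mem_span_pair : x ∈ span ({x, y} : Set R) := subset_span (Set.mem_insert _ _)

theorem right_mem_span_pair : y ∈ span ({x, y} : Set R) :=
  subset_span (Set.mem_insert_of_mem _ rfl)

abbrev spanPairRelations : Submodule R (span ({x, y} : Set R)) :=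
  Submodule.comap (span ({x, y} : Set R)).subtype (span {x} * I + span {y} * J)

theorem le_ker_mkQ_comp_left :
    I ≤ LinearMap.ker ((spanPairRelations I J x y).mkQ ∘ₗ
      LinearMap.toSpanSingleton R _ ⟨x, left_mem_span_pair x y⟩) := by
  intro a ha
  rw [LinearMap.mem_ker, LinearMap.comp_apply, Submodule.mkQ_apply, Submodule.Quotient.mk_eq_zero]
  change a * x ∈ span {x} * I + span {y} * J
  exact mem_span_singleton_mul_add_span_singleton_mul_iff.mpr ⟨a, ha, 0, J.zero_mem, by ring⟩

theorem le_ker_mkQ_comp_right :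
    J ≤ LinearMap.ker ((spanPairRelations I J x y).mkQ ∘ₗ
      LinearMap.toSpanSingleton R _ ⟨y, right_mem_span_pair x y⟩) := by
  intro b hb
  rw [LinearMap.mem_ker, LinearMap.comp_apply, Submodule.mkQ_apply, Submodule.Quotient.mk_eq_zero]
  change b * y ∈ span {x} * I + span {y} * J
  exact mem_span_singleton_mul_add_span_singleton_mul_iff.mpr ⟨0, I.zero_mem, b, hb, by ring⟩

def prodToSpanPairQuot :
    (R ⧸ I) × (R ⧸ J) →ₗ[R] span ({x, y} : Set R) ⧸ spanPairRelations I J x y :=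
  (Submodule.liftQ I _ (le_ker_mkQ_comp_left I J x y)).coprod
    (Submodule.liftQ J _ (le_ker_mkQ_comp_right I J x y))

theorem prodToSpanPairQuot_mk (a b : R) :
    prodToSpanPairQuot I J x y (Quotient.mk I a, Quotient.mk J b) =
      Submodule.Quotient.mk ⟨a * x + b * y, add_mem (mul_mem_left _ a (left_mem_span_pair x y))
        (mul_mem_left _ b (right_mem_span_pair x y))⟩ :=
  rfl

theorem prodToSpanPairQuot_surjective : Function.Surjective (prodToSpanPairQuot I J x y) := by
  intro z
  obtain ⟨⟨m, hm⟩, rfl⟩ := Submodule.Quotient.mk_surjective _ z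
  obtain ⟨a, b, rfl⟩ := mem_span_pair.mp hm
  exact ⟨_, prodToSpanPairQuot_mk I J x y a b⟩

theorem exact_colonQuotToProd_prodToSpanPairQuot
    (hx : x ∈ nonZeroDivisors R) (hy : ∀ r : R, y * r ∈ span {x} → r ∈ span {x}) :
    Function.Exact (colonQuotToProd I J x y) (prodToSpanPairQuot I J x y) := by
  rintro ⟨u, v⟩
  obtain ⟨a, rfl⟩ := Quotient.mk_surjective u
  obtain ⟨b, rfl⟩ := Quotient.mk_surjective v
  rw [prodToSpanPairQuot_mk, Submodule.Quotient.mk_eq_zero, Submodule.mem_comap,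
    Submodule.subtype_apply, mem_span_singleton_mul_add_span_singleton_mul_iff]
  constructor
  · rintro ⟨i, hi, j, hj, hij⟩
    obtain ⟨r, hr, hr'⟩ := exists_eq_neg_mul_and_eq_mul_of_mul_add_mul_eq_zero hx hy
      (a := a - i) (b := b - j) (by linear_combination hij.symm)
    refine ⟨Quotient.mk _ r, ?_⟩
    rw [colonQuotToProd_mk, ← hr, ← hr', Prod.mk.injEq, Quotient.eq, Quotient.eq]
    exact ⟨by simpa using I.neg_mem hi, by simpa using J.neg_mem hj⟩
  · rintro ⟨r, hr⟩
    obtain ⟨r, rfl⟩ := Quotient.mk_surjective r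
    rw [colonQuotToProd_mk, Prod.mk.injEq, Quotient.eq, Quotient.eq] at hr
    exact ⟨_, I.neg_mem hr.1, _, J.neg_mem hr.2, by ring⟩

end Ideal

/-- For `x, y` a regular sequence on `R` (i.e. `x` a nonzerodivisor on `R` and
`y` a nonzerodivisor on `R/(x)`) and ideals `I, J`, the sequence
`0 → R/((I:y) ∩ (J:x)) → R/I ⊕ R/J → (x,y)/(xI + yJ) → 0`
with maps `ψ(r) = (-ry, rx)` and `φ(a,b) = ax + by` is exact. -/
theorem stmt0 {R : Type*} [CommRing R] (I J : Ideal R) (x y : R)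
    (hx : x ∈ nonZeroDivisors R)
    (hy : ∀ r : R, y * r ∈ Ideal.span {x} → r ∈ Ideal.span {x}) :
    ∃ (ψ : (R ⧸ (I.colon (Ideal.span {y}) ⊓ J.colon (Ideal.span {x}))) →ₗ[R]
        ((R ⧸ I) × (R ⧸ J)))
      (φ : ((R ⧸ I) × (R ⧸ J)) →ₗ[R]
        (↥(Ideal.span {x, y}) ⧸ (Submodule.comap (Ideal.span {x, y} : Ideal R).subtype
            (Ideal.span {x} * I + Ideal.span {y} * J)))),
      (∀ r : R, ψ (Ideal.Quotient.mk _ r) =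
          (Ideal.Quotient.mk I (-(r * y)), Ideal.Quotient.mk J (r * x))) ∧
      (∀ a b : R, φ (Ideal.Quotient.mk I a, Ideal.Quotient.mk J b) =
          Submodule.Quotient.mk
            ⟨a * x + b * y,
              Ideal.add_mem _
                (Ideal.mul_mem_left _ a (Ideal.subset_span (Set.mem_insert _ _)))
                (Ideal.mul_mem_left _ b
                  (Ideal.subset_span (Set.mem_insert_of_mem _ rfl)))⟩) ∧
      Function.Injective ψ ∧ Function.Exact ψ φ ∧ Function.Surjective φ :=
  ⟨Ideal.colonQuotToProd I J x y, Ideal.prodToSpanPairQuot I J x y,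
    Ideal.colonQuotToProd_mk I J x y, Ideal.prodToSpanPairQuot_mk I J x y,
    Ideal.colonQuotToProd_injective I J x y,
    Ideal.exact_colonQuotToProd_prodToSpanPairQuot I J x y hx hy,
    Ideal.prodToSpanPairQuot_surjective I J x y⟩
end

section
/- Let (R,m) be a one-dimensional Cohen–Macaulay Noetherian local ring with infinite residue field, I an m-primary ideal, and x ∈ m such that (x) is a minimal reduction of m (so x is a nonzerodivisor). Then for all n ≥ 0, the minimal number of generators satisfies μ(I^n) = e(R) − ℓ(mI^n / xI^n), where e(R) is the Hilbert–Samuel multiplicity of R and ℓ denotes length; in particular μ(I^n) ≤ e(R). -/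
open IsLocalRing

/-- The length of a module, as the Krull dimension of its lattice of submodules. -/
noncomputable def modLength (R M : Type*) [Ring R] [AddCommGroup M] [Module R M] :
    WithBot ℕ∞ :=
  Order.krullDim (Submodule R M)

/-- The length `ℓ(P/N)` of the subquotient `P/N` of `R` determined by ideals `N ≤ P`. -/
noncomputable def qlen {R : Type*} [CommRing R] (N P : Ideal R) : WithBot ℕ∞ :=
  modLength R (↥P ⧸ (Submodule.comap P.subtype N))

/-- A Noetherian local ring is Cohen–Macaulay if some system of parameters
is a regular sequence. -/
def IsCMLocal (R : Type*) [CommRing R] [IsLocalRing R] : Prop :=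
  ∃ rs : List R, RingTheory.Sequence.IsRegular R rs ∧
    (Ideal.span {x | x ∈ rs}).radical = maximalIdeal R ∧
    (rs.length : WithBot ℕ∞) = ringKrullDim R

section Comb

variable {α β : Type*} [PartialOrder α] [PartialOrder β]

lemma comb_lemma (L : ℕ) (f : ℕ → α) (g : ℕ → β)
    (hf : ∀ i < L, f i ≤ f (i+1)) (hg : ∀ i < L, g i ≤ g (i+1))
    (hstep : ∀ i < L, f i ≠ f (i+1) ∨ g i ≠ g (i+1)) :
    ∃ (p : LTSeries α) (q : LTSeries β),
      p.last = f L ∧ q.last = g L ∧ L ≤ p.length + q.length := by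
  induction L with
  | zero => exact ⟨RelSeries.singleton _ (f 0), RelSeries.singleton _ (g 0), rfl, rfl, by simp⟩
  | succ L ih =>
    obtain ⟨p, q, hp, hq, hlen⟩ := ih (fun i hi => hf i (hi.trans (Nat.lt_succ_self L)))
      (fun i hi => hg i (hi.trans (Nat.lt_succ_self L)))
      (fun i hi => hstep i (hi.trans (Nat.lt_succ_self L)))
    have hfL := hf L (Nat.lt_succ_self L)
    have hgL := hg L (Nat.lt_succ_self L)
    rcases hfL.lt_or_eq with hflt | hfeq
    · rcases hgL.lt_or_eq with hglt | hgeq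
      · refine ⟨p.snoc (f (L+1)) (hp ▸ hflt), q.snoc (g (L+1)) (hq ▸ hglt),
          RelSeries.last_snoc _ _ _, RelSeries.last_snoc _ _ _, ?_⟩
        simp only [RelSeries.snoc_length]; omega
      · refine ⟨p.snoc (f (L+1)) (hp ▸ hflt), q, RelSeries.last_snoc _ _ _, hq.trans hgeq, ?_⟩
        simp only [RelSeries.snoc_length]; omega
    · rcases hgL.lt_or_eq with hglt | hgeq
      · refine ⟨p, q.snoc (g (L+1)) (hq ▸ hglt), hp.trans hfeq, RelSeries.last_snoc _ _ _, ?_⟩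
        simp only [RelSeries.snoc_length]; omega
      · exact absurd (hstep L (Nat.lt_succ_self L)) (by simp [hfeq, hgeq])

end Comb

section Length

variable {R M M₂ : Type*} [Ring R] [AddCommGroup M] [Module R M]
  [AddCommGroup M₂] [Module R M₂]

lemma modLength_congr (e : M ≃ₗ[R] M₂) : modLength R M = modLength R M₂ :=
  Order.krullDim_eq_of_orderIso (Submodule.orderIsoMapComap e)

lemma modLength_le_add (N : Submodule R M) :
    modLength R M ≤ modLength R N + modLength R (M ⧸ N) := by
  rw [modLength, Order.krullDim]
  refine iSup_le fun s => ?_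
  set L := s.length with hL
  have hidx : ∀ i : ℕ, min i L < L + 1 := fun i => Nat.lt_succ_of_le (Nat.min_le_right _ _)
  set f : ℕ → Submodule R N := fun i => Submodule.comap N.subtype (s ⟨min i L, hidx i⟩) with hfdef
  set g : ℕ → Submodule R (M ⧸ N) := fun i => Submodule.map N.mkQ (s ⟨min i L, hidx i⟩) with hgdef
  have hmono : ∀ i : ℕ, s ⟨min i L, hidx i⟩ ≤ s ⟨min (i+1) L, hidx (i+1)⟩ := fun i =>
    s.strictMono.monotone (Fin.mk_le_mk.mpr (min_le_min (Nat.le_succ i) le_rfl))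
  obtain ⟨p, q, hp, hq, hlen⟩ := comb_lemma L f g
    (fun i _ => Submodule.comap_mono (hmono i))
    (fun i _ => Submodule.map_mono (hmono i))
    (by
      intro i hiL
      by_contra hcon
      push_neg at hcon
      obtain ⟨h1, h2⟩ := hcon
      have hmin : min i L = i := Nat.min_eq_left hiL.le
      have hmin' : min (i+1) L = i + 1 := Nat.min_eq_left hiL
      set a := s ⟨min i L, hidx i⟩ with ha
      set b := s ⟨min (i+1) L, hidx (i+1)⟩ with hb
      have hab : a < b := s.strictMono (by rw [Fin.mk_lt_mk, hmin, hmin']; omega)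
      have e1 : N ⊓ a = N ⊓ b := by
        rw [← Submodule.map_comap_subtype, ← Submodule.map_comap_subtype]
        exact congrArg _ h1
      have e2 : N ⊔ a = N ⊔ b := by
        rw [← Submodule.comap_map_mkQ, ← Submodule.comap_map_mkQ]
        exact congrArg _ h2
      have hba : b ≤ a := by
        calc b = b ⊓ (N ⊔ b) := (inf_eq_left.mpr le_sup_right).symm
          _ = b ⊓ (N ⊔ a) := by rw [e2]
          _ = b ⊓ N ⊔ a := (inf_sup_assoc_of_le _ hab.le).symm
          _ = a ⊓ N ⊔ a := by rw [inf_comm b N, ← e1, inf_comm N a]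
          _ ≤ a := sup_le inf_le_left le_rfl
      exact absurd hba hab.not_ge)
  calc (L : WithBot ℕ∞) ≤ ((p.length + q.length : ℕ) : WithBot ℕ∞) := by
        exact_mod_cast hlen
    _ = (p.length : WithBot ℕ∞) + (q.length : WithBot ℕ∞) := by push_cast; ring
    _ ≤ modLength R N + modLength R (M ⧸ N) :=
        add_le_add (Order.LTSeries.length_le_krullDim p) (Order.LTSeries.length_le_krullDim q)

lemma add_modLength_le (N : Submodule R M) :
    modLength R N + modLength R (M ⧸ N) ≤ modLength R M := by
  rw [modLength, modLength, modLength, Order.krullDim_eq_iSup_length,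
    Order.krullDim_eq_iSup_length, Order.krullDim_eq_iSup_length,
    ← WithBot.coe_add, WithBot.coe_le_coe, ENat.iSup_add]
  refine iSup_le fun p => ?_
  rw [ENat.add_iSup]
  refine iSup_le fun q => ?_
  have hQ : StrictMono (Submodule.comap N.mkQ : Submodule R (M ⧸ N) → Submodule R M) :=
    Monotone.strictMono_of_injective (fun _ _ h => Submodule.comap_mono h)
      (Submodule.comap_injective_of_surjective N.mkQ_surjective)
  have hP : StrictMono (Submodule.map N.subtype : Submodule R N → Submodule R M) :=
    Monotone.strictMono_of_injective (fun _ _ h => Submodule.map_mono h)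
      (Submodule.map_injective_of_injective N.injective_subtype)
  set P : LTSeries (Submodule R M) := p.map _ hP with hPdef
  set Q : LTSeries (Submodule R M) := q.map _ hQ with hQdef
  have hQlen : Q.length = q.length := rfl
  have hPlen : P.length = p.length := rfl
  rcases Nat.eq_zero_or_pos p.length with h0 | hpos
  · have := le_iSup (fun s : LTSeries (Submodule R M) => (s.length : ℕ∞)) Q
    rw [hQlen] at this
    simpa [h0] using this
  · have hcon : P.eraseLast.last < Q.head := by
      have h1 : P.eraseLast.last < P.last :=
        P.eraseLast_last_rel_last (by rw [hPlen]; omega)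
      refine lt_of_lt_of_le h1 ?_
      have h2 : P.last ≤ N := by
        rw [hPdef, LTSeries.last_map]
        exact Submodule.map_subtype_le _ _
      refine le_trans h2 ?_
      have hN : N = Submodule.comap N.mkQ ⊥ := by
        rw [Submodule.comap_bot, Submodule.ker_mkQ]
      rw [hN, hQdef, LTSeries.head_map]
      exact Submodule.comap_mono bot_le
    set S : LTSeries (Submodule R M) := P.eraseLast.append Q hcon with hSdef
    have hS : S.length = p.length + q.length := by
      rw [hSdef, RelSeries.append_length, RelSeries.eraseLast_length, hPlen, hQlen]
      omega
    have := le_iSup (fun s : LTSeries (Submodule R M) => (s.length : ℕ∞)) S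
    rw [hS] at this
    exact_mod_cast this

lemma modLength_eq_add (N : Submodule R M) :
    modLength R M = modLength R N + modLength R (M ⧸ N) :=
  le_antisymm (modLength_le_add N) (add_modLength_le N)

end Length

section Qlen

variable {R : Type*} [CommRing R]

lemma qlen_top (N : Ideal R) : qlen N ⊤ = modLength R (R ⧸ N) := by
  refine modLength_congr (Submodule.Quotient.equiv _ _ (Submodule.topEquiv) ?_)
  ext z
  simp only [Submodule.mem_map, Submodule.mem_comap]
  constructor
  · rintro ⟨y, hy, rfl⟩
    simpa using hy
  · intro hz
    exact ⟨⟨z, trivial⟩, by simpa using hz, rfl⟩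

lemma qlen_additive (A B C : Ideal R) (hAB : A ≤ B) (hBC : B ≤ C) :
    qlen A C = qlen A B + qlen B C := by
  set A' := Submodule.comap C.subtype A with hA'
  set B' := Submodule.comap C.subtype B with hB'
  have hA'B' : A' ≤ B' := Submodule.comap_mono hAB
  have main := modLength_eq_add (R := R) (M := ↥C ⧸ A') (Submodule.map A'.mkQ B')
  have hq : modLength R ((↥C ⧸ A') ⧸ (Submodule.map A'.mkQ B')) = qlen B C :=
    modLength_congr (Submodule.quotientQuotientEquivQuotient A' B' hA'B')
  have hn : modLength R ↥(Submodule.map A'.mkQ B') = qlen A B := by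
    set f : ↥B' →ₗ[R] (↥C ⧸ A') := A'.mkQ.comp B'.subtype with hfdef
    have hrange : LinearMap.range f = Submodule.map A'.mkQ B' := by
      rw [hfdef, LinearMap.range_comp, Submodule.range_subtype]
    have hker : LinearMap.ker f = Submodule.comap B'.subtype A' := by
      rw [hfdef, LinearMap.ker_comp, Submodule.ker_mkQ]
    have e1 : (↥B' ⧸ Submodule.comap B'.subtype A') ≃ₗ[R] ↥(Submodule.map A'.mkQ B') :=
      (Submodule.quotEquivOfEq _ _ hker.symm).trans
        ((f.quotKerEquivRange).trans (LinearEquiv.ofEq _ _ hrange))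
    have e2 : (↥B' ⧸ Submodule.comap B'.subtype A') ≃ₗ[R]
        (↥B ⧸ Submodule.comap B.subtype A) := by
      refine Submodule.Quotient.equiv _ _ (Submodule.comapSubtypeEquivOfLe hBC) ?_
      ext z
      simp only [Submodule.mem_map, Submodule.mem_comap]
      constructor
      · rintro ⟨y, hy, rfl⟩
        simpa [Submodule.comapSubtypeEquivOfLe, hA'] using hy
      · intro hz
        exact ⟨⟨⟨(z : R), hBC z.2⟩, z.2⟩, by simpa [hA'] using hz, by
          simp [Submodule.comapSubtypeEquivOfLe]⟩
    exact (modLength_congr e1).symm.trans (modLength_congr e2)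
  rw [qlen, ← hA', main, hn, hq]

lemma qlen_mul (y : R) (hy : y ∈ nonZeroDivisors R) (K : Ideal R) :
    qlen (Ideal.span {y} * K) (Ideal.span {y}) = qlen K ⊤ := by
  rw [qlen_top]
  set f : R →ₗ[R] R := LinearMap.toSpanSingleton R R y with hfdef
  have hinj : Function.Injective f := by
    intro a b hab
    simp only [hfdef, LinearMap.toSpanSingleton_apply, smul_eq_mul] at hab
    exact mul_cancel_right_mem_nonZeroDivisors hy |>.mp hab
  have hrange : LinearMap.range f = (Ideal.span {y} : Ideal R) := by
    rw [Ideal.span, LinearMap.span_singleton_eq_range]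
  set E : R ≃ₗ[R] ↥(Ideal.span {y} : Ideal R) :=
    (LinearEquiv.ofInjective f hinj).trans (LinearEquiv.ofEq _ _ hrange) with hE
  have hEapp : ∀ a : R, ((E a : R)) = a * y := by
    intro a
    simp [hE, hfdef, LinearEquiv.ofInjective_apply, LinearMap.toSpanSingleton_apply, smul_eq_mul]
  refine (modLength_congr (Submodule.Quotient.equiv K _ E ?_)).symm
  ext z
  simp only [Submodule.mem_map, Submodule.mem_comap]
  constructor
  · rintro ⟨a, ha, rfl⟩
    show ((E a : R)) ∈ Ideal.span {y} * K
    rw [hEapp a]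
    exact Ideal.mem_span_singleton_mul.mpr ⟨a, ha, mul_comm y a⟩
  · intro hz
    obtain ⟨c, hc, hcz⟩ := Ideal.mem_span_singleton_mul.mp hz
    refine ⟨c, hc, ?_⟩
    have : ((E c : R)) = (z : R) := by rw [hEapp c, mul_comm]; exact hcz
    exact Subtype.ext this

lemma qlen_mono (J' J : Ideal R) (h : J' ≤ J) : qlen J ⊤ ≤ qlen J' ⊤ := by
  rw [qlen_top, qlen_top]
  set φ : (R ⧸ J') →ₗ[R] (R ⧸ J) := Submodule.mapQ J' J LinearMap.id h with hφ
  have hsurj : Function.Surjective φ := by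
    intro z
    obtain ⟨a, rfl⟩ := Submodule.mkQ_surjective J z
    refine ⟨Submodule.mkQ J' a, ?_⟩
    rw [hφ, Submodule.mkQ_apply, Submodule.mkQ_apply, Submodule.mapQ_apply, LinearMap.id_apply]
  exact Order.krullDim_le_of_strictMono (Submodule.comap φ)
    (Monotone.strictMono_of_injective (fun _ _ hh => Submodule.comap_mono hh)
      (Submodule.comap_injective_of_surjective hsurj))

lemma qlen_ne_bot (N P : Ideal R) : qlen N P ≠ ⊥ := by
  have h := Order.krullDim_nonneg
    (α := Submodule R (↥P ⧸ (Submodule.comap P.subtype N)))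
  intro hc
  rw [qlen, modLength] at hc
  rw [hc] at h
  simp at h

lemma wb_add_ne_top {a b : WithBot ℕ∞} (ha : a ≠ ⊤) (hb : b ≠ ⊤) : a + b ≠ ⊤ := by
  cases a with
  | bot => simp
  | coe a' =>
    cases b with
    | bot => simp
    | coe b' =>
      rw [← WithBot.coe_add, ← WithBot.coe_top]
      intro hc
      rcases WithTop.add_eq_top.mp (WithBot.coe_injective hc) with h | h
      · exact ha (by rw [h]; exact WithBot.coe_top)
      · exact hb (by rw [h]; exact WithBot.coe_top)

lemma wb_cancel {a b c : WithBot ℕ∞} (hcb : c ≠ ⊥) (hct : c ≠ ⊤) (h : a + c = b + c) : a = b := by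
  cases c with
  | bot => exact absurd rfl hcb
  | coe c' =>
    have hc' : c' ≠ ⊤ := fun hh => hct (by rw [hh, WithBot.coe_top])
    cases a with
    | bot =>
      rw [WithBot.bot_add] at h
      rcases WithBot.add_eq_bot.mp h.symm with hh | hh
      · rw [hh]
      · exact absurd hh (by simp)
    | coe a' =>
      cases b with
      | bot =>
        rw [WithBot.bot_add] at h
        rcases WithBot.add_eq_bot.mp h with hh | hh
        · exact absurd hh (by simp)
        · exact absurd hh (by simp)
      | coe b' =>
        rw [← WithBot.coe_add, ← WithBot.coe_add] at h
        exact congrArg _ (WithTop.add_right_cancel hc' (WithBot.coe_injective h))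

end Qlen

lemma wb_nat_ne_top (n : ℕ) : (n : WithBot ℕ∞) ≠ ⊤ := by
  have h : ((n : ℕ∞) : WithBot ℕ∞) = (n : WithBot ℕ∞) := by push_cast; rfl
  rw [← h, ← WithBot.coe_top]
  intro hc
  exact (ENat.coe_ne_top n) (WithBot.coe_injective hc)

lemma qlen_nonneg {R : Type*} [CommRing R] (N P : Ideal R) : 0 ≤ qlen N P :=
  Order.krullDim_nonneg

/-- in a 1-dimensional CM local ring with infinite residue field, if `(x)` is a
minimal reduction of `m` (so `ℓ(R/xR) = e(R)`), and `I` is `m`-primary, then for all `n ≥ 0`,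
`μ(Iⁿ) = e(R) − ℓ(mIⁿ/xIⁿ)` (stated additively: `μ(Iⁿ) + ℓ(mIⁿ/xIⁿ) = e(R)`), where
`μ(Iⁿ) = ℓ(Iⁿ/mIⁿ)`; in particular `μ(Iⁿ) ≤ e(R)`. -/
theorem stmt4 {R : Type*} [CommRing R] [IsLocalRing R] [IsNoetherianRing R]
    (hCM : IsCMLocal R) (hdim : ringKrullDim R = 1)
    (hres : Infinite (ResidueField R))
    (I : Ideal R) (hIm : I ≤ maximalIdeal R) (hprim : ∃ k, maximalIdeal R ^ k ≤ I)
    (x : R) (hx : x ∈ maximalIdeal R) (hxreg : x ∈ nonZeroDivisors R)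
    (hred : ∃ N, ∀ n ≥ N, maximalIdeal R ^ (n + 1) = Ideal.span {x} * maximalIdeal R ^ n)
    (e : ℕ) (he : modLength R (R ⧸ Ideal.span {x}) = (e : WithBot ℕ∞)) :
    ∀ n : ℕ,
      qlen (maximalIdeal R * I ^ n) (I ^ n) +
          qlen (Ideal.span {x} * I ^ n) (maximalIdeal R * I ^ n) = (e : WithBot ℕ∞) ∧
      qlen (maximalIdeal R * I ^ n) (I ^ n) ≤ (e : WithBot ℕ∞) := by
  intro n
  obtain ⟨k, hk⟩ := hprim
  set m : Ideal R := maximalIdeal R with hm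
  set Jn : Ideal R := I ^ n with hJn
  set xI : Ideal R := Ideal.span {x} * Jn with hxI
  have hxm : Ideal.span {x} ≤ m := by rw [Ideal.span_le]; simpa using hx
  have h1 : xI ≤ m * Jn := Ideal.mul_mono hxm le_rfl
  have h2 : m * Jn ≤ Jn := Ideal.mul_le_right
  have h3 : xI ≤ Jn := le_trans h1 h2
  have h4 : xI ≤ Ideal.span {x} := Ideal.mul_le_left
  have hepow : ∀ j : ℕ, qlen (Ideal.span {x ^ j}) ⊤ ≠ ⊤ := by
    intro j
    induction j with
    | zero =>
      rw [pow_zero, Ideal.span_singleton_one, qlen_top]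
      rw [modLength, Order.krullDim_eq_zero_of_unique]
      simpa using wb_nat_ne_top 0
    | succ j ih =>
      have hle : Ideal.span {x ^ (j+1)} ≤ Ideal.span {x ^ j} :=
        Ideal.span_singleton_le_span_singleton.mpr (pow_dvd_pow x (Nat.le_succ j))
      rw [qlen_additive _ _ _ hle le_top]
      refine wb_add_ne_top ?_ ih
      have hsp : Ideal.span {x ^ (j+1)} = Ideal.span {x ^ j} * Ideal.span {x} := by
        rw [Ideal.span_singleton_mul_span_singleton, pow_succ]
      rw [hsp, qlen_mul (x ^ j) (pow_mem hxreg j) _, qlen_top, he]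
      exact wb_nat_ne_top e
  have hfin : qlen Jn ⊤ ≠ ⊤ := by
    have hxkn : Ideal.span {x ^ (k * n)} ≤ Jn := by
      rw [Ideal.span_le, Set.singleton_subset_iff]
      have hxk : x ^ k ∈ I := hk (Ideal.pow_mem_pow hx k)
      rw [pow_mul]
      exact Ideal.pow_mem_pow hxk n
    exact ne_top_of_le_ne_top (hepow (k * n)) (qlen_mono _ _ hxkn)
  have E1 : qlen xI ⊤ = qlen xI Jn + qlen Jn ⊤ := qlen_additive _ _ _ h3 le_top
  have E2 : qlen xI ⊤ = qlen xI (Ideal.span {x}) + qlen (Ideal.span {x}) ⊤ :=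
    qlen_additive _ _ _ h4 le_top
  have E3 : qlen xI (Ideal.span {x}) = qlen Jn ⊤ := qlen_mul x hxreg Jn
  have E4 : qlen (Ideal.span {x}) ⊤ = (e : WithBot ℕ∞) := by rw [qlen_top, he]
  have ET : qlen xI Jn = (e : WithBot ℕ∞) := by
    apply wb_cancel (qlen_ne_bot Jn ⊤) hfin
    rw [← E1, E2, E3, E4, add_comm]
  have E5 : qlen xI Jn = qlen xI (m * Jn) + qlen (m * Jn) Jn := qlen_additive _ _ _ h1 h2
  constructor
  · rw [add_comm, ← E5, ET]
  · rw [← ET, E5]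
    exact le_add_of_nonneg_left (qlen_nonneg _ _)
end

section
/- Let (R,m) be a one-dimensional Cohen–Macaulay Noetherian local ring with infinite residue field, I an m-primary ideal, and (x) a minimal reduction of m. If μ(I) = e(R), then mI^n = xI^n for all n ≥ 1, and hence μ(I^n) = e(R) for all n ≥ 1; i.e., the Hilbert series of the fiber cone is (1 + (e(R) − 1)λ)/(1 − λ). -/
/-!
Since `x` is a nonzerodivisor, `ℓ(R/xJ) = ℓ(R/xR) + ℓ(R/J)` for every ideal `J`, so
`ℓ(Iⁿ/xIⁿ) = ℓ(R/xR) = e` as soon as `R/Iⁿ` has finite length, which holds because `I` is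
`m`-primary. In the chain `xI ⊆ mI ⊆ I` both `I/xI` and `I/mI` have length `e`, so `mI/xI`
has length `0` and `mI = xI`; multiplying by `Iⁿ⁻¹` gives `mIⁿ = xIⁿ`, hence
`μ(Iⁿ) = ℓ(Iⁿ/mIⁿ) = ℓ(Iⁿ/xIⁿ) = e` for `n ≥ 1`, while `μ(I⁰) = ℓ(R/m) = 1`.
-/

open IsLocalRing

open Module
open scoped Pointwise

section
variable {R M : Type*} [Ring R] [AddCommGroup M] [Module R M]

theorem Submodule.length_quotient_eq_length_subquotient_add {N P : Submodule R M} (h : N ≤ P) :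
    length R (M ⧸ N) = length R (P ⧸ N.comap P.subtype) + length R (M ⧸ P) := by
  refine length_eq_add_of_exact ((N.comap P.subtype).mapQ N P.subtype le_rfl) (factor h)
    ?_ (factor_surjective h) ?_
  · rw [← LinearMap.ker_eq_bot, ker_mapQ, mkQ_map_self]
  · rw [LinearMap.exact_iff, range_mapQ, ker_mapQ, range_subtype]
    simp

theorem Submodule.length_top_subquotient (N : Submodule R M) :
    length R ((⊤ : Submodule R M) ⧸ N.comap (⊤ : Submodule R M).subtype) = length R (M ⧸ N) := by
  rw [length_quotient_eq_length_subquotient_add (le_top : N ≤ ⊤), length_eq_zero (M := M ⧸ ⊤),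
    add_zero]

theorem Submodule.eq_of_le_of_length_quotient_eq {N L : Submodule R M} (h : N ≤ L)
    (hfin : length R (M ⧸ N) ≠ ⊤) (heq : length R (M ⧸ N) = length R (M ⧸ L)) : N = L := by
  rw [length_quotient_eq_length_subquotient_add h] at hfin heq
  have hL : length R (M ⧸ L) ≠ ⊤ := fun h ↦ hfin (by rw [h, add_top])
  have hzero : length R (L ⧸ N.comap L.subtype) = 0 :=
    WithTop.add_right_cancel hL (heq.trans (zero_add _).symm)
  rw [length_eq_zero_iff, Quotient.subsingleton_iff, comap_subtype_eq_top] at hzero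
  exact h.antisymm hzero

theorem Submodule.eq_of_le_of_length_subquotient_eq {N L P : Submodule R M} (hNL : N ≤ L)
    (hLP : L ≤ P) (hfin : length R (P ⧸ N.comap P.subtype) ≠ ⊤)
    (heq : length R (P ⧸ N.comap P.subtype) = length R (P ⧸ L.comap P.subtype)) : N = L := by
  have h := eq_of_le_of_length_quotient_eq (comap_mono hNL) hfin heq
  rw [← inf_eq_right.mpr (hNL.trans hLP), ← inf_eq_right.mpr hLP, ← map_comap_subtype,
    ← map_comap_subtype, h]

end

section
variable {R : Type*} [CommRing R]

theorem Ideal.length_quotient_span_singleton_mul {x : R} (hx : x ∈ nonZeroDivisors R)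
    (J : Ideal R) :
    length R (R ⧸ Ideal.span {x} * J) = length R (R ⧸ Ideal.span {x}) + length R (R ⧸ J) := by
  rw [add_comm, show Ideal.span {x} * J = x • J from Submodule.ideal_span_singleton_smul x J]
  exact length_eq_add_of_exact _ _ (Ideal.mulQuot_injective J hx) (Ideal.quotOfMul_surjective J)
    (Ideal.exact_mulQuot_quotOfMul J)

theorem Ideal.length_subquotient_span_singleton_mul {x : R} (hx : x ∈ nonZeroDivisors R)
    {J : Ideal R} (hJ : length R (R ⧸ J) ≠ ⊤) :
    length R (J ⧸ Submodule.comap J.subtype (Ideal.span {x} * J)) =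
      length R (R ⧸ Ideal.span {x}) :=
  WithTop.add_right_cancel hJ <|
    (Submodule.length_quotient_eq_length_subquotient_add Ideal.mul_le_right).symm.trans
      (length_quotient_span_singleton_mul hx J)

theorem Ideal.mul_eq_span_singleton_mul_of_length_subquotient_eq {x : R} {𝔞 I : Ideal R}
    (hx : x ∈ 𝔞) (hxreg : x ∈ nonZeroDivisors R) (hxfin : length R (R ⧸ Ideal.span {x}) ≠ ⊤)
    (hI : length R (R ⧸ I) ≠ ⊤)
    (h𝔞 : length R (I ⧸ Submodule.comap I.subtype (𝔞 * I)) = length R (R ⧸ Ideal.span {x})) :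
    𝔞 * I = Ideal.span {x} * I := by
  have hxI := length_subquotient_span_singleton_mul hxreg hI
  have hx𝔞 : Ideal.span {x} ≤ 𝔞 := (span_singleton_le_iff_mem _).mpr hx
  exact (Submodule.eq_of_le_of_length_subquotient_eq (mul_mono_left hx𝔞) mul_le_right
    (hxI.trans_ne hxfin) (hxI.trans h𝔞.symm)).symm

end

namespace IsLocalRing

variable {R : Type*} [CommRing R] [IsLocalRing R]

theorem length_top_subquotient_maximalIdeal :
    length R ((⊤ : Ideal R) ⧸ Submodule.comap (⊤ : Ideal R).subtype (maximalIdeal R)) = 1 := by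
  have : IsSimpleModule R (R ⧸ maximalIdeal R) :=
    isSimpleModule_iff_isCoatom.mpr (maximalIdeal.isMaximal R).out
  rw [Submodule.length_top_subquotient, length_eq_one]

theorem length_quotient_ne_top_of_maximalIdeal_pow_le [IsNoetherianRing R] {J : Ideal R} {k : ℕ}
    (hk : maximalIdeal R ^ k ≤ J) : length R (R ⧸ J) ≠ ⊤ := by
  rcases eq_or_ne J ⊤ with rfl | hJ
  · simp
  have hrad : J.radical = maximalIdeal R :=
    ((Ideal.radical_mono (le_maximalIdeal hJ)).trans_eq
      (maximalIdeal.isMaximal R).isPrime.radical).antisymm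
        fun y hy ↦ ⟨k, hk (Ideal.pow_mem_pow hy k)⟩
  have hmin : maximalIdeal R ∈ J.minimalPrimes := by
    rw [← Ideal.radical_minimalPrimes, hrad, Ideal.minimalPrimes_eq_subsingleton_self]
    rfl
  have := quotient_artinian_of_mem_minimalPrimes_of_isLocalRing J hmin
  rw [length_ne_top_iff, isFiniteLength_iff_isNoetherian_isArtinian]
  exact ⟨isNoetherian_quotient J,
    isArtinian_of_surjective_algebraMap (Ideal.Quotient.mk_surjective (I := J))⟩

end IsLocalRing

theorem PowerSeries.mk_mul_one_sub_X_of_eq {R : Type*} [CommRing R] {a : ℕ → R} {c : R}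
    (h : ∀ n, 1 ≤ n → a n = c) : mk a * (1 - X) = C (a 0) + C (c - a 0) * X := by
  ext (_ | n)
  · simp
  · rw [mul_sub, mul_one, map_sub, map_add, coeff_succ_mul_X, coeff_succ_mul_X, coeff_mk,
      coeff_mk, coeff_C, coeff_C, h _ (by omega)]
    rcases n with _ | n
    · simp
    · simp [h (n + 1) (by omega)]

open PowerSeries in
theorem stmt5_general {R : Type*} [CommRing R] [IsLocalRing R] [IsNoetherianRing R]
    (I : Ideal R) (hprim : ∃ k, maximalIdeal R ^ k ≤ I)
    (x : R) (hx : x ∈ maximalIdeal R) (hxreg : x ∈ nonZeroDivisors R)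
    (e : ℕ) (he : modLength R (R ⧸ Ideal.span {x}) = (e : WithBot ℕ∞))
    (μ : ℕ → ℕ)
    (hμ : ∀ n : ℕ, qlen (maximalIdeal R * I ^ n) (I ^ n) = (μ n : WithBot ℕ∞))
    (hmin : μ 1 = e) :
    (∀ n : ℕ, 1 ≤ n → maximalIdeal R * I ^ n = Ideal.span {x} * I ^ n) ∧
    (∀ n : ℕ, 1 ≤ n → μ n = e) ∧
    PowerSeries.mk (fun n => (μ n : ℤ)) * (1 - X) = 1 + C ((e : ℤ) - 1) * X := by
  obtain ⟨k, hk⟩ := hprim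
  have hx_len : length R (R ⧸ Ideal.span {x}) = e := by exact_mod_cast (coe_length R _).trans he
  have hμ_len (n : ℕ) :
      length R (↥(I ^ n) ⧸ Submodule.comap (I ^ n).subtype (maximalIdeal R * I ^ n)) = μ n := by
    exact_mod_cast (coe_length R _).trans (hμ n)
  have hfin (n : ℕ) : length R (R ⧸ I ^ n) ≠ ⊤ :=
    length_quotient_ne_top_of_maximalIdeal_pow_le (k := k * n)
      (by rw [pow_mul]; exact Ideal.pow_right_mono hk n)
  have hmI : maximalIdeal R * I = Ideal.span {x} * I := by
    refine Ideal.mul_eq_span_singleton_mul_of_length_subquotient_eq hx hxreg (hx_len ▸ ENat.natCast_ne_top e)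
      (pow_one I ▸ hfin 1) ?_
    rw [hx_len, ← hmin, ← hμ_len 1, pow_one]
  have hmIn (n : ℕ) (hn : 1 ≤ n) : maximalIdeal R * I ^ n = Ideal.span {x} * I ^ n := by
    obtain ⟨n, rfl⟩ := Nat.exists_eq_add_of_le' hn
    rw [pow_succ', ← mul_assoc, ← mul_assoc, hmI]
  have hμn (n : ℕ) (hn : 1 ≤ n) : μ n = e := by
    have h := hμ_len n
    rw [hmIn n hn, Ideal.length_subquotient_span_singleton_mul hxreg (hfin n), hx_len] at h
    exact_mod_cast h.symm
  have hμ0 : μ 0 = 1 := by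
    have h := hμ_len 0
    rw [pow_zero, Ideal.one_eq_top, Ideal.mul_top, length_top_subquotient_maximalIdeal] at h
    exact_mod_cast h.symm
  refine ⟨hmIn, hμn, ?_⟩
  rw [mk_mul_one_sub_X_of_eq (c := (e : ℤ)) fun n hn ↦ by rw [hμn n hn], hμ0]
  simp

open PowerSeries in
/-- under the setup of the previous statement, if `μ(I) = e(R)` then
`mIⁿ = xIⁿ` and `μ(Iⁿ) = e(R)` for all `n ≥ 1`; i.e. the Hilbert series of the fiber
cone is `(1 + (e(R) − 1)λ)/(1 − λ)`. -/
theorem stmt5 {R : Type*} [CommRing R] [IsLocalRing R] [IsNoetherianRing R]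
    (hCM : IsCMLocal R) (hdim : ringKrullDim R = 1)
    (hres : Infinite (ResidueField R))
    (I : Ideal R) (hIm : I ≤ maximalIdeal R) (hprim : ∃ k, maximalIdeal R ^ k ≤ I)
    (x : R) (hx : x ∈ maximalIdeal R) (hxreg : x ∈ nonZeroDivisors R)
    (hred : ∃ N, ∀ n ≥ N, maximalIdeal R ^ (n + 1) = Ideal.span {x} * maximalIdeal R ^ n)
    (e : ℕ) (he : modLength R (R ⧸ Ideal.span {x}) = (e : WithBot ℕ∞))
    (μ : ℕ → ℕ)
    (hμ : ∀ n : ℕ, qlen (maximalIdeal R * I ^ n) (I ^ n) = (μ n : WithBot ℕ∞))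
    (hmin : μ 1 = e) :
    (∀ n : ℕ, 1 ≤ n → maximalIdeal R * I ^ n = Ideal.span {x} * I ^ n) ∧
    (∀ n : ℕ, 1 ≤ n → μ n = e) ∧
    PowerSeries.mk (fun n => (μ n : ℤ)) * (1 - X) = 1 + C ((e : ℤ) - 1) * X :=
  stmt5_general I hprim x hx hxreg e he μ hμ hmin
end

section
/- Let (R,m) be a one-dimensional Cohen–Macaulay Noetherian local ring with infinite residue field, I an m-primary ideal with μ(I) = e(R) − 1, and (x) a minimal reduction of m. If s is the smallest integer with mI^s = xI^s, then ℓ(mI^n/xI^n) = 1 for 1 ≤ n ≤ s−1, mI^n = xI^n for n ≥ s, and the Hilbert series of F(I) is (1 + (e(R) − 2)λ + λ^s)/(1 − λ). -/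
open IsLocalRing

/-!
Since `x` is a nonzerodivisor and `ℓ(R/Iⁿ) < ∞`, computing `ℓ(R/xIⁿ)` in two ways gives
`ℓ(Iⁿ/xIⁿ) = ℓ(R/xR) = e`, hence `ℓ(mIⁿ/xIⁿ) + μ(Iⁿ) = e` for every `n`. For `n = 1` this forces
`xI ⋖ mI`, so `mI = xI + (y)` for any `y = c a ∉ xI` with `c ∈ m`, `a ∈ I`, and `m y ⊆ xI`.
Then `y I ⊆ a m I ⊆ x I² + (y a)`, so `mIⁿ⁺¹ = xIⁿ⁺¹ + (y aⁿ)` with `m y aⁿ ⊆ xIⁿ⁺¹`: every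
`mIⁿ/xIⁿ` (`n ≥ 1`) is zero or simple. Thus `μ(Iⁿ) = e - 1` for `1 ≤ n < s`, `μ(Iⁿ) = e` for
`n ≥ s` and `μ(R) = 1`, which is the claimed Hilbert series.
-/

namespace Submodule

variable {R M : Type*} [Ring R] [AddCommGroup M] [Module R M]

noncomputable abbrev subquotientLength (N P : Submodule R M) : ℕ∞ :=
  Module.length R (↥P ⧸ N.comap P.subtype)

variable {N P : Submodule R M}

theorem length_quotient_eq_add (h : N ≤ P) :
    Module.length R (M ⧸ N) = N.subquotientLength P + Module.length R (M ⧸ P) := by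
  refine Module.length_eq_add_of_exact ((N.comap P.subtype).mapQ N P.subtype le_rfl) (factor h)
    ?_ (factor_surjective h) ?_
  · rw [← LinearMap.ker_eq_bot]
    exact ker_liftQ_eq_bot' _ _ (by rw [LinearMap.ker_comp, ker_mkQ])
  · rw [LinearMap.exact_iff, mapQ, range_liftQ, LinearMap.range_comp, range_subtype]
    ext m
    obtain ⟨m, rfl⟩ := N.mkQ_surjective m
    simp only [factor, mapQ_apply, mkQ_apply, LinearMap.id_apply, LinearMap.mem_ker,
      Quotient.mk_eq_zero, mem_map]
    refine ⟨fun hm => ⟨m, hm, rfl⟩, fun ⟨y, hy, hym⟩ => ?_⟩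
    rw [Quotient.eq] at hym
    simpa using P.sub_mem hy (h hym)

theorem subquotientLength_eq_zero_iff (h : N ≤ P) : N.subquotientLength P = 0 ↔ N = P := by
  rw [Module.length_eq_zero_iff, Quotient.subsingleton_iff, comap_subtype_eq_top]
  exact ⟨h.antisymm, ge_of_eq⟩

theorem subquotientLength_eq_one_iff (h : N ≤ P) : N.subquotientLength P = 1 ↔ N ⋖ P := by
  rw [Module.length_eq_one_iff, covBy_iff_quot_is_simple h]

end Submodule

theorem qlen_eq_subquotientLength {R : Type*} [CommRing R] (N P : Ideal R) :
    qlen N P = N.subquotientLength P :=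
  (Module.coe_length _ _).symm

theorem mul_pow_eq_mul_pow_of_le {M : Type*} [CommMonoid M] {a c b : M} {s n : ℕ}
    (h : a * b ^ s = c * b ^ s) (hn : s ≤ n) : a * b ^ n = c * b ^ n := by
  obtain ⟨k, rfl⟩ := Nat.exists_eq_add_of_le hn
  rw [pow_add, ← mul_assoc, h, mul_assoc]

namespace Ideal

variable {R : Type*} [CommRing R]

theorem length_quotient_span_singleton_mul_s7 {x : R} (hx : x ∈ nonZeroDivisors R) (J : Ideal R) :
    Module.length R (R ⧸ span {x} * J) =
      Module.length R (R ⧸ J) + Module.length R (R ⧸ span {x}) := by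
  rw [← smul_eq_mul, Submodule.ideal_span_singleton_smul]
  exact Module.length_eq_add_of_exact _ _ (J.mulQuot_injective hx) J.quotOfMul_surjective
    J.exact_mulQuot_quotOfMul

theorem subquotientLength_add {N P Q : Ideal R} (hNP : N ≤ P) (hPQ : P ≤ Q)
    (hQ : Module.length R (R ⧸ Q) ≠ ⊤) :
    N.subquotientLength P + P.subquotientLength Q = N.subquotientLength Q := by
  have hN := Submodule.length_quotient_eq_add (hNP.trans hPQ)
  rw [Submodule.length_quotient_eq_add hNP, Submodule.length_quotient_eq_add hPQ, ← add_assoc] at hN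
  exact WithTop.add_right_cancel hQ hN

theorem subquotientLength_span_singleton_mul {x : R} (hx : x ∈ nonZeroDivisors R) {J : Ideal R}
    (hJ : Module.length R (R ⧸ J) ≠ ⊤) :
    (span {x} * J).subquotientLength J = Module.length R (R ⧸ span {x}) := by
  have h := length_quotient_span_singleton_mul_s7 hx J
  rw [Submodule.length_quotient_eq_add mul_le_right, add_comm] at h
  exact WithTop.add_left_cancel hJ h

theorem mul_pow_le_sup_mul_pow {J Y A I : Ideal R} (hA : A ≤ I)
    (h : Y * I ≤ J * I ^ 2 ⊔ Y * A) (k : ℕ) : Y * I ^ k ≤ J * I ^ (k + 1) ⊔ Y * A ^ k := by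
  induction k with
  | zero => simp
  | succ k ih =>
    calc Y * I ^ (k + 1) = Y * I ^ k * I := by rw [pow_succ, mul_assoc]
      _ ≤ (J * I ^ (k + 1) ⊔ Y * A ^ k) * I := mul_mono_left ih
      _ = J * I ^ (k + 2) ⊔ A ^ k * (Y * I) := by rw [sup_mul]; ring_nf
      _ ≤ J * I ^ (k + 2) ⊔ A ^ k * (J * I ^ 2 ⊔ Y * A) := sup_le_sup_left (mul_mono_right h) _
      _ = J * (I ^ (k + 2) ⊔ A ^ k * I ^ 2) ⊔ Y * A ^ (k + 1) := by
        rw [mul_sup, mul_sup, ← sup_assoc]; ring_nf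
      _ ≤ J * I ^ (k + 2) ⊔ Y * A ^ (k + 1) := by
        refine sup_le_sup_right (mul_mono_right (sup_le le_rfl ?_)) _
        calc A ^ k * I ^ 2 ≤ I ^ k * I ^ 2 := mul_mono_left (pow_right_mono hA k)
          _ = I ^ (k + 2) := (pow_add I k 2).symm

theorem mul_pow_succ_eq_sup_span_singleton {M X I : Ideal R} {c a : R} (hXM : X ≤ M)
    (hc : c ∈ M) (ha : a ∈ I) (h : M * I = X * I ⊔ span {c * a}) (n : ℕ) :
    M * I ^ (n + 1) = X * I ^ (n + 1) ⊔ span {c * a ^ (n + 1)} := by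
  have hcaI : span {c * a} * I ≤ X * I ^ 2 ⊔ span {c * a} * span {a} :=
    calc span {c * a} * I = span {a} * (span {c} * I) := by
          rw [← span_singleton_mul_span_singleton]; ring
      _ ≤ span {a} * (M * I) :=
          mul_mono_right (mul_mono_left ((span_singleton_le_iff_mem _).mpr hc))
      _ ≤ _ := by
          rw [h, mul_sup, mul_left_comm, mul_comm _ (span {a}), sq]
          exact sup_le_sup_right
            (mul_mono_right (mul_mono_left ((span_singleton_le_iff_mem _).mpr ha))) _
  refine le_antisymm ?_ (sup_le (mul_mono_left hXM) ?_)
  · calc M * I ^ (n + 1) = X * I ^ (n + 1) ⊔ span {c * a} * I ^ n := by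
          rw [pow_succ', ← mul_assoc, h, sup_mul, mul_assoc]
      _ ≤ _ := by
          have := mul_pow_le_sup_mul_pow ((span_singleton_le_iff_mem _).mpr ha) hcaI n
          rw [span_singleton_pow, span_singleton_mul_span_singleton, mul_assoc, ← pow_succ'] at this
          exact sup_le le_sup_left this
  · exact (span_singleton_le_iff_mem _).mpr (mul_mem_mul hc (pow_mem_pow ha _))

end Ideal

namespace IsLocalRing

variable {R : Type*} [CommRing R] [IsLocalRing R]

theorem subquotientLength_maximalIdeal_top : (maximalIdeal R).subquotientLength ⊤ = 1 :=
  (Submodule.subquotientLength_eq_one_iff le_top).mpr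
    (Ideal.isMaximal_def.mp (maximalIdeal.isMaximal R)).covBy_top

theorem eq_or_covBy_sup_span_singleton {N : Ideal R} {b : R}
    (hb : maximalIdeal R * Ideal.span {b} ≤ N) :
    N = N ⊔ Ideal.span {b} ∨ N ⋖ N ⊔ Ideal.span {b} := by
  by_cases hbN : b ∈ N
  · exact Or.inl (left_eq_sup.mpr ((Ideal.span_singleton_le_iff_mem N).mpr hbN))
  refine Or.inr ⟨left_lt_sup.mpr ((Ideal.span_singleton_le_iff_mem N).not.mpr hbN),
    fun c hNc hc => ?_⟩
  obtain ⟨q, hqc, hqN⟩ := SetLike.exists_of_lt hNc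
  obtain ⟨n, hn, t, ht, rfl⟩ := Submodule.mem_sup.mp (hc.le hqc)
  obtain ⟨r, rfl⟩ := Ideal.mem_span_singleton'.mp ht
  have hr : IsUnit r := by
    by_contra hr
    exact hqN (N.add_mem hn (hb (Ideal.mul_mem_mul ((mem_maximalIdeal r).mpr hr)
      (Ideal.mem_span_singleton_self b))))
  have hbc : b ∈ c := by
    have : r * b ∈ c := by simpa using c.sub_mem hqc (hNc.le hn)
    simpa [← mul_assoc] using c.mul_mem_left (hr.unit⁻¹ : Rˣ) this
  exact hc.not_ge (sup_le hNc.le ((Ideal.span_singleton_le_iff_mem c).mpr hbc))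

section Noetherian

variable [IsNoetherianRing R]

theorem _root_.CovBy.maximalIdeal_mul_le {N P : Ideal R} (h : N ⋖ P) :
    maximalIdeal R * P ≤ N := by
  rcases h.eq_or_eq le_sup_left (sup_le h.le Ideal.mul_le_right) with hN | hP
  · exact hN ▸ le_sup_right
  · have hP' : P ≤ N ⊔ maximalIdeal R • P := hP.ge
    exact absurd (Submodule.le_of_le_smul_of_le_jacobson_bot (IsNoetherian.noetherian P)
      (maximalIdeal_le_jacobson ⊥) hP') h.lt.not_ge

theorem span_singleton_mul_pow_eq_or_covBy {x : R} (hx : x ∈ maximalIdeal R) {I : Ideal R}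
    (h : Ideal.span {x} * I ⋖ maximalIdeal R * I) (n : ℕ) :
    Ideal.span {x} * I ^ (n + 1) = maximalIdeal R * I ^ (n + 1) ∨
      Ideal.span {x} * I ^ (n + 1) ⋖ maximalIdeal R * I ^ (n + 1) := by
  obtain ⟨c, hc, a, ha, hca⟩ : ∃ c ∈ maximalIdeal R, ∃ a ∈ I, c * a ∉ Ideal.span {x} * I := by
    by_contra! H
    exact h.lt.not_ge (Ideal.mul_le.mpr H)
  have hmI : maximalIdeal R * I = Ideal.span {x} * I ⊔ Ideal.span {c * a} :=
    ((h.eq_or_eq le_sup_left (sup_le h.le ((Ideal.span_singleton_le_iff_mem _).mpr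
      (Ideal.mul_mem_mul hc ha)))).resolve_left fun h' =>
        hca (h' ▸ Ideal.mem_sup_right (Ideal.mem_span_singleton_self _))).symm
  have hb : maximalIdeal R * Ideal.span {c * a ^ (n + 1)} ≤ Ideal.span {x} * I ^ (n + 1) := by
    have hmca : maximalIdeal R * Ideal.span {c * a} ≤ Ideal.span {x} * I :=
      (Ideal.mul_mono_right (hmI ▸ le_sup_right)).trans h.maximalIdeal_mul_le
    rw [pow_succ', ← mul_assoc, ← Ideal.span_singleton_mul_span_singleton, ← mul_assoc, pow_succ',
      ← mul_assoc]
    exact Ideal.mul_mono hmca ((Ideal.span_singleton_le_iff_mem _).mpr (Ideal.pow_mem_pow ha n))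
  rw [Ideal.mul_pow_succ_eq_sup_span_singleton ((Ideal.span_singleton_le_iff_mem _).mpr hx)
    hc ha hmI n]
  exact eq_or_covBy_sup_span_singleton hb

theorem length_quotient_ne_top_of_pow_le {J : Ideal R} {k : ℕ} (hJ : maximalIdeal R ^ k ≤ J) :
    Module.length R (R ⧸ J) ≠ ⊤ := by
  rcases eq_or_ne J ⊤ with rfl | hJtop
  · simp
  have hrad : J.radical = maximalIdeal R :=
    le_antisymm ((Ideal.radical_mono (le_maximalIdeal hJtop)).trans_eq
      (maximalIdeal.isMaximal R).isPrime.radical)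
      fun y hy => ⟨k, hJ (Ideal.pow_mem_pow hy k)⟩
  have : IsArtinianRing (R ⧸ J) := quotient_artinian_of_mem_minimalPrimes_of_isLocalRing J <| by
    rw [← Ideal.radical_minimalPrimes, hrad, Ideal.minimalPrimes_eq_subsingleton_self]
    rfl
  have : IsArtinian R (R ⧸ J) :=
    isArtinian_of_surjective_algebraMap (Ideal.Quotient.mk_surjective (I := J))
  exact Module.length_ne_top

variable {x : R} (hx : x ∈ maximalIdeal R) (hxreg : x ∈ nonZeroDivisors R) {J : Ideal R} {k : ℕ}
  (hJ : maximalIdeal R ^ k ≤ J)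
include hx hxreg hJ

theorem subquotientLength_maximalIdeal_mul_add :
    (Ideal.span {x} * J).subquotientLength (maximalIdeal R * J) +
      (maximalIdeal R * J).subquotientLength J = Module.length R (R ⧸ Ideal.span {x}) := by
  have hfin := length_quotient_ne_top_of_pow_le hJ
  rw [Ideal.subquotientLength_add
    (Ideal.mul_mono_left ((Ideal.span_singleton_le_iff_mem _).mpr hx)) Ideal.mul_le_right hfin]
  exact Ideal.subquotientLength_span_singleton_mul hxreg hfin

theorem subquotientLength_maximalIdeal_mul_of_eq (h : Ideal.span {x} * J = maximalIdeal R * J) :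
    (maximalIdeal R * J).subquotientLength J = Module.length R (R ⧸ Ideal.span {x}) := by
  rw [← subquotientLength_maximalIdeal_mul_add hx hxreg hJ,
    (Submodule.subquotientLength_eq_zero_iff h.le).mpr h, zero_add]

theorem subquotientLength_maximalIdeal_mul_add_one_of_covBy
    (h : Ideal.span {x} * J ⋖ maximalIdeal R * J) :
    (maximalIdeal R * J).subquotientLength J + 1 = Module.length R (R ⧸ Ideal.span {x}) := by
  rw [← subquotientLength_maximalIdeal_mul_add hx hxreg hJ,
    (Submodule.subquotientLength_eq_one_iff h.le).mpr h, add_comm]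

theorem covBy_of_subquotientLength_maximalIdeal_mul_add_one
    (hfin : (maximalIdeal R * J).subquotientLength J ≠ ⊤)
    (h : (maximalIdeal R * J).subquotientLength J + 1 = Module.length R (R ⧸ Ideal.span {x})) :
    Ideal.span {x} * J ⋖ maximalIdeal R * J := by
  rw [← subquotientLength_maximalIdeal_mul_add hx hxreg hJ, add_comm _ 1] at h
  exact (Submodule.subquotientLength_eq_one_iff
    (Ideal.mul_mono_left ((Ideal.span_singleton_le_iff_mem _).mpr hx))).mp
    (WithTop.add_right_cancel hfin h).symm

end Noetherian

end IsLocalRing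

open PowerSeries in
theorem PowerSeries.mk_mul_one_sub_X_eq_of_jump {e s : ℕ} {f : ℕ → ℕ} (hs : 1 ≤ s) (h0 : f 0 = 1)
    (hlt : ∀ n, 1 ≤ n → n < s → f n + 1 = e) (hge : ∀ n, s ≤ n → f n = e) :
    mk (fun n => (f n : ℤ)) * (1 - X) = 1 + C ((e : ℤ) - 2) * X + X ^ s := by
  have hf : mk (fun n => (f n : ℤ)) = C (2 - (e : ℤ)) + (C ((e : ℤ) - 1) + X ^ s) * mk 1 := by
    ext n
    simp only [coeff_mk, map_add, add_mul, coeff_C_mul, coeff_X_pow_mul', coeff_C, Pi.one_apply,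
      mul_one]
    rcases Nat.eq_zero_or_pos n with rfl | hn
    · simp [h0, show ¬ s ≤ 0 by omega]
    · rcases lt_or_ge n s with hns | hns
      · simp [hn.ne', hns.not_ge, ← hlt n hn hns]
      · simp [hn.ne', hns, hge n hns]
  rw [hf, add_mul, mul_assoc, mk_one_mul_one_sub_eq_one]
  simp only [map_sub, map_one, map_ofNat]
  ring

open PowerSeries in
theorem stmt7_general {R : Type*} [CommRing R] [IsLocalRing R] [IsNoetherianRing R]
    (I : Ideal R) (hprim : ∃ k, maximalIdeal R ^ k ≤ I)
    (x : R) (hx : x ∈ maximalIdeal R) (hxreg : x ∈ nonZeroDivisors R)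
    (e : ℕ) (he : modLength R (R ⧸ Ideal.span {x}) = (e : WithBot ℕ∞))
    (μ : ℕ → ℕ)
    (hμ : ∀ n : ℕ, qlen (maximalIdeal R * I ^ n) (I ^ n) = (μ n : WithBot ℕ∞))
    (hmin : μ 1 + 1 = e)
    (s : ℕ) (hs1 : 1 ≤ s)
    (hs : maximalIdeal R * I ^ s = Ideal.span {x} * I ^ s)
    (hsmin : ∀ n : ℕ, 1 ≤ n → n < s → maximalIdeal R * I ^ n ≠ Ideal.span {x} * I ^ n) :
    (∀ n : ℕ, 1 ≤ n → n ≤ s - 1 →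
      qlen (Ideal.span {x} * I ^ n) (maximalIdeal R * I ^ n) = 1) ∧
    (∀ n : ℕ, s ≤ n → maximalIdeal R * I ^ n = Ideal.span {x} * I ^ n) ∧
    PowerSeries.mk (fun n => (μ n : ℤ)) * (1 - X) =
      1 + C ((e : ℤ) - 2) * X + X ^ s := by
  obtain ⟨k, hk⟩ := hprim
  have hIn (n : ℕ) : maximalIdeal R ^ (k * n) ≤ I ^ n := by
    rw [pow_mul]; exact Ideal.pow_right_mono hk n
  have he' : Module.length R (R ⧸ Ideal.span {x}) = e := by
    rw [modLength, ← Module.coe_length] at he; exact_mod_cast he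
  have hμ' (n : ℕ) : (maximalIdeal R * I ^ n).subquotientLength (I ^ n) = μ n := by
    exact_mod_cast (qlen_eq_subquotientLength _ _).symm.trans (hμ n)
  have hcov1 : Ideal.span {x} * I ⋖ maximalIdeal R * I := by
    simpa only [pow_one] using covBy_of_subquotientLength_maximalIdeal_mul_add_one hx hxreg (hIn 1)
      (by rw [hμ']; exact ENat.natCast_ne_top _) (by rw [hμ', he', ← hmin, Nat.cast_succ])
  have hcov (n : ℕ) (h1 : 1 ≤ n) (h2 : n < s) :
      Ideal.span {x} * I ^ n ⋖ maximalIdeal R * I ^ n := by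
    obtain ⟨n, rfl⟩ := Nat.exists_eq_add_of_le' h1
    exact (span_singleton_mul_pow_eq_or_covBy hx hcov1 n).resolve_left
      fun h => hsmin _ h1 h2 h.symm
  have hpow (n : ℕ) (hn : s ≤ n) := mul_pow_eq_mul_pow_of_le hs hn
  have hμ0 : μ 0 = 1 := by
    have := hμ' 0
    rw [pow_zero, Ideal.one_eq_top, Ideal.mul_top, subquotientLength_maximalIdeal_top] at this
    exact_mod_cast this.symm
  refine ⟨fun n h1 h2 => ?_, hpow, PowerSeries.mk_mul_one_sub_X_eq_of_jump hs1 hμ0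
    (fun n h1 h2 => ?_) fun n hn => ?_⟩
  · have h := hcov n h1 (by omega)
    rw [qlen_eq_subquotientLength, (Submodule.subquotientLength_eq_one_iff h.le).mpr h]
    rfl
  · have := subquotientLength_maximalIdeal_mul_add_one_of_covBy hx hxreg (hIn n) (hcov n h1 h2)
    rw [hμ', he'] at this; exact_mod_cast this
  · have := subquotientLength_maximalIdeal_mul_of_eq hx hxreg (hIn n) (hpow n hn).symm
    rw [hμ', he'] at this; exact_mod_cast this

open PowerSeries in
/-- under the setup of Statement 4, if `μ(I) = e(R) − 1` and `s` is the smallest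
integer with `mI^s = xI^s`, then `ℓ(mIⁿ/xIⁿ) = 1` for `1 ≤ n ≤ s − 1`, `mIⁿ = xIⁿ` for
`n ≥ s`, and the Hilbert series of `F(I)` is `(1 + (e(R) − 2)λ + λ^s)/(1 − λ)`. -/
theorem stmt7 {R : Type*} [CommRing R] [IsLocalRing R] [IsNoetherianRing R]
    (hCM : IsCMLocal R) (hdim : ringKrullDim R = 1)
    (hres : Infinite (ResidueField R))
    (I : Ideal R) (hIm : I ≤ maximalIdeal R) (hprim : ∃ k, maximalIdeal R ^ k ≤ I)
    (x : R) (hx : x ∈ maximalIdeal R) (hxreg : x ∈ nonZeroDivisors R)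
    (hred : ∃ N, ∀ n ≥ N, maximalIdeal R ^ (n + 1) = Ideal.span {x} * maximalIdeal R ^ n)
    (e : ℕ) (he : modLength R (R ⧸ Ideal.span {x}) = (e : WithBot ℕ∞))
    (μ : ℕ → ℕ)
    (hμ : ∀ n : ℕ, qlen (maximalIdeal R * I ^ n) (I ^ n) = (μ n : WithBot ℕ∞))
    (hmin : μ 1 + 1 = e)
    (s : ℕ) (hs1 : 1 ≤ s)
    (hs : maximalIdeal R * I ^ s = Ideal.span {x} * I ^ s)
    (hsmin : ∀ n : ℕ, 1 ≤ n → n < s → maximalIdeal R * I ^ n ≠ Ideal.span {x} * I ^ n) :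
    (∀ n : ℕ, 1 ≤ n → n ≤ s - 1 →
      qlen (Ideal.span {x} * I ^ n) (maximalIdeal R * I ^ n) = 1) ∧
    (∀ n : ℕ, s ≤ n → maximalIdeal R * I ^ n = Ideal.span {x} * I ^ n) ∧
    PowerSeries.mk (fun n => (μ n : ℤ)) * (1 - X) =
      1 + C ((e : ℤ) - 2) * X + X ^ s :=
  stmt7_general I hprim x hx hxreg e he μ hμ hmin s hs1 hs hsmin
end

section
/- Let (R,m) be a d-dimensional Cohen–Macaulay Noetherian local ring (d ≥ 1) and I an m-primary ideal. Suppose (x, a_1, …, a_{d−1}) with x ∈ m, a_i ∈ I, satisfies ℓ(mI/(xI + (a_1,…,a_{d−1})m)) = 1. Then ℓ(mI^n/((a_1,…,a_{d−1})mI^{n−1} + xI^n)) ≤ 1 for all n ≥ 1. Moreover, there exist y ∈ m and b ∈ I such that mI^n = (a_1,…,a_{d−1})mI^{n−1} + xI^n + (yb^n) for all n ≥ 1. -/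
open IsLocalRing

/-!
Put `J = (a₁, …, a_{d-1})` and `L = xI + Jm`. The hypothesis says that `mI/L` is a simple module:
it is killed by `m`, so `m·mI ⊆ L`, and it is generated by the class of one of the products `yb`
(`y ∈ m`, `b ∈ I`) that span `mI`, so `mI = L + (yb)`. Multiplying by `I` and using
`(yb^n)I = (b^n)·(y)I ⊆ (b^n)(L + (yb)) ⊆ LI^n + (yb^{n+1})`, induction gives
`mI^{n+1} = LI^n + (yb^{n+1})`. Hence `mI^{n+1}/LI^n` is cyclic, generated by `yb^{n+1}`, and
killed by `m` since `m·mI^{n+1} = (m·mI)I^n ⊆ LI^n`; over a local ring such a module has length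
at most 1.
-/

theorem IsSimpleModule.annihilator_eq_maximalIdeal {R M : Type*} [CommRing R] [IsLocalRing R]
    [AddCommGroup M] [Module R M] [IsSimpleModule R M] :
    Module.annihilator R M = maximalIdeal R :=
  eq_maximalIdeal IsSimpleModule.annihilator_isMaximal

theorem Submodule.mk_comap_subtype_eq_zero_iff {R M : Type*} [Ring R] [AddCommGroup M]
    [Module R M] {N P : Submodule R M} {p : P} :
    (Submodule.Quotient.mk p : P ⧸ Submodule.comap P.subtype N) = 0 ↔ (p : M) ∈ N := by
  simp

theorem krullDim_submodule_le_one_of_cyclic {R M : Type*} [CommRing R] [IsLocalRing R]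
    [AddCommGroup M] [Module R M] (v : M) (hv : ∀ z : M, ∃ r : R, r • v = z)
    (hm : ∀ r ∈ maximalIdeal R, r • v = 0) : Order.krullDim (Submodule R M) ≤ 1 := by
  refine Order.krullDim_le_one_iff_of_boundedOrder.mpr fun S ↦ or_iff_not_imp_left.mpr fun hS ↦ ?_
  obtain ⟨z, hzS, hz0⟩ := (Submodule.ne_bot_iff S).mp hS
  obtain ⟨r, rfl⟩ := hv z
  have hr : IsUnit r := of_not_not fun hr ↦ hz0 (hm r hr)
  have hvS : v ∈ S := (S.smul_mem_iff_of_isUnit hr).mp hzS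
  exact eq_top_iff.mpr fun z _ ↦ (hv z).elim fun s hs ↦ hs ▸ S.smul_mem s hvS

section qlen

variable {R : Type*} [CommRing R] {N P : Ideal R}

theorem qlen_le_one_of_le_sup_span_singleton [IsLocalRing R] {g : R} (hg : g ∈ P)
    (hP : P ≤ N ⊔ Ideal.span {g}) (hmP : maximalIdeal R * P ≤ N) : qlen N P ≤ 1 := by
  refine krullDim_submodule_le_one_of_cyclic (Submodule.Quotient.mk ⟨g, hg⟩) ?_
    fun r hr ↦ ?_
  · rintro ⟨p⟩
    obtain ⟨n, hn, _, hz, hnz⟩ := Submodule.mem_sup.mp (hP p.2)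
    obtain ⟨r, rfl⟩ := Ideal.mem_span_singleton'.mp hz
    refine ⟨r, (Submodule.Quotient.eq _).mpr ?_⟩
    simpa [← hnz] using N.neg_mem hn
  · rw [← Submodule.Quotient.mk_smul, Submodule.mk_comap_subtype_eq_zero_iff]
    exact hmP (Ideal.mul_mem_mul hr hg)

theorem isSimpleModule_of_qlen_eq_one (h : qlen N P = 1) :
    IsSimpleModule R (P ⧸ Submodule.comap P.subtype N) :=
  (isSimpleModule_iff R _).mpr (Order.krullDim_eq_one_iff_of_boundedOrder.mp h)

theorem maximalIdeal_mul_le_of_qlen_eq_one [IsLocalRing R] (h : qlen N P = 1) :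
    maximalIdeal R * P ≤ N := by
  have := isSimpleModule_of_qlen_eq_one h
  refine Ideal.mul_le.mpr fun r hr p hp ↦ ?_
  rw [← IsSimpleModule.annihilator_eq_maximalIdeal (M := P ⧸ Submodule.comap P.subtype N),
    Module.mem_annihilator] at hr
  have hrp := hr (Submodule.Quotient.mk ⟨p, hp⟩)
  rwa [← Submodule.Quotient.mk_smul, Submodule.mk_comap_subtype_eq_zero_iff] at hrp

theorem exists_le_sup_span_singleton_of_qlen_eq_one {T : Set R} (hT : P = Ideal.span T)
    (h : qlen N P = 1) : ∃ g ∈ T, P ≤ N ⊔ Ideal.span {g} := by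
  have := isSimpleModule_of_qlen_eq_one h
  obtain ⟨g, hgT, hgN⟩ : ∃ g ∈ T, g ∉ N := by
    by_contra! hTN
    obtain ⟨⟨p⟩, hp⟩ := (nontrivial_iff_exists_ne (0 : P ⧸ Submodule.comap P.subtype N)).mp
      (IsSimpleModule.nontrivial R _)
    exact hp ((Submodule.mk_comap_subtype_eq_zero_iff).mpr
      ((hT ▸ Ideal.span_le.mpr hTN : P ≤ N) p.2))
  have hgP : g ∈ P := hT ▸ Ideal.subset_span hgT
  refine ⟨g, hgT, fun p hp ↦ ?_⟩
  have hspan := IsSimpleModule.span_singleton_eq_top R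
    (m := (Submodule.Quotient.mk ⟨g, hgP⟩ : P ⧸ Submodule.comap P.subtype N))
    (by rwa [Ne, Submodule.mk_comap_subtype_eq_zero_iff])
  obtain ⟨r, hr⟩ := Submodule.mem_span_singleton.mp
    (hspan ▸ Submodule.mem_top : Submodule.Quotient.mk ⟨p, hp⟩ ∈ _)
  rw [← Submodule.Quotient.mk_smul, Submodule.Quotient.eq] at hr
  exact Submodule.mem_sup.mpr ⟨p - r * g, by simpa using N.neg_mem hr, r * g,
    Ideal.mul_mem_left _ _ (Ideal.mem_span_singleton_self g), sub_add_cancel p _⟩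

end qlen

theorem Ideal.mul_pow_succ_eq_of_mul_eq {R : Type*} [CommSemiring R] {m I L : Ideal R} {y b : R}
    (hy : y ∈ m) (hb : b ∈ I) (h : m * I = L + Ideal.span {y * b}) (n : ℕ) :
    m * I ^ (n + 1) = L * I ^ n + Ideal.span {y * b ^ (n + 1)} := by
  refine le_antisymm ?_ (sup_le ?_ ?_)
  · induction n with
    | zero => simpa using h.le
    | succ n ih =>
      have hyI : Ideal.span {y} * I ≤ m * I := Ideal.mul_mono_left (by simpa using hy)
      calc m * I ^ (n + 2) = m * I ^ (n + 1) * I := by ring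
        _ ≤ (L * I ^ n + Ideal.span {y * b ^ (n + 1)}) * I := Ideal.mul_mono_left ih
        _ = L * I ^ (n + 1) + Ideal.span {b ^ (n + 1)} * (Ideal.span {y} * I) := by
          simp only [add_mul, ← Ideal.span_singleton_mul_span_singleton]; ring
        _ ≤ L * I ^ (n + 1) + Ideal.span {b ^ (n + 1)} * (L + Ideal.span {y * b}) := by
          gcongr; exact h ▸ hyI
        _ = L * I ^ (n + 1) + Ideal.span {b ^ (n + 1)} * L + Ideal.span {y * b ^ (n + 2)} := by
          simp only [mul_add, Ideal.span_singleton_mul_span_singleton]; ring_nf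
        _ ≤ L * I ^ (n + 1) + Ideal.span {y * b ^ (n + 2)} := by
          have hbL : Ideal.span {b ^ (n + 1)} * L ≤ L * I ^ (n + 1) := mul_comm L _ ▸
            Ideal.mul_mono_right ((Ideal.span_singleton_le_iff_mem _).mpr (Ideal.pow_mem_pow hb _))
          gcongr
          exact sup_le le_rfl hbL
  · calc L * I ^ n ≤ m * I * I ^ n := Ideal.mul_mono_left (h ▸ le_sup_left)
      _ = m * I ^ (n + 1) := by ring
  · exact Ideal.span_singleton_le_iff_mem _ |>.mpr (Ideal.mul_mem_mul hy (Ideal.pow_mem_pow hb _))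

theorem qlen_mul_pow_le_one {R : Type*} [CommRing R] [IsLocalRing R] {I L : Ideal R} {y b : R}
    (hy : y ∈ maximalIdeal R) (hb : b ∈ I)
    (h : maximalIdeal R * I = L + Ideal.span {y * b})
    (hmL : maximalIdeal R * (maximalIdeal R * I) ≤ L) (n : ℕ) :
    qlen (L * I ^ n) (maximalIdeal R * I ^ (n + 1)) ≤ 1 := by
  refine qlen_le_one_of_le_sup_span_singleton (Ideal.mul_mem_mul hy (Ideal.pow_mem_pow hb _))
    (Ideal.mul_pow_succ_eq_of_mul_eq hy hb h n).le ?_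
  calc maximalIdeal R * (maximalIdeal R * I ^ (n + 1))
      = maximalIdeal R * (maximalIdeal R * I) * I ^ n := by ring
    _ ≤ L * I ^ n := Ideal.mul_mono_left hmL

theorem stmt8_general {R : Type*} [CommRing R] [IsLocalRing R]
    (d : ℕ) (I : Ideal R) (x : R) (hx : x ∈ maximalIdeal R)
    (a : Fin (d - 1) → R) (ha : ∀ i, a i ∈ I)
    (hone : qlen (Ideal.span {x} * I + Ideal.span (Set.range a) * maximalIdeal R)
        (maximalIdeal R * I) = 1) :
    (∀ n : ℕ, 1 ≤ n →
      qlen (Ideal.span (Set.range a) * (maximalIdeal R * I ^ (n - 1)) +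
          Ideal.span {x} * I ^ n)
        (maximalIdeal R * I ^ n) ≤ 1) ∧
    ∃ y ∈ maximalIdeal R, ∃ b ∈ I, ∀ n : ℕ, 1 ≤ n →
      maximalIdeal R * I ^ n =
        Ideal.span (Set.range a) * (maximalIdeal R * I ^ (n - 1)) +
          Ideal.span {x} * I ^ n + Ideal.span {y * b ^ n} := by
  set m := maximalIdeal R
  set J := Ideal.span (Set.range a)
  set L := Ideal.span {x} * I + J * m
  obtain ⟨_, hyb, hmI⟩ :=
    exists_le_sup_span_singleton_of_qlen_eq_one (Submodule.mul_eq_span_mul_set m I) hone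
  obtain ⟨y, hy, b, hb, rfl⟩ := Set.mem_mul.mp hyb
  have hJI : J ≤ I := Ideal.span_le.mpr (Set.range_subset_iff.mpr ha)
  have hLm : L ≤ m * I := sup_le (Ideal.mul_mono_left ((Ideal.span_singleton_le_iff_mem _).mpr hx))
    ((Ideal.mul_mono_left hJI).trans_eq (mul_comm I m))
  have hbase : m * I = L + Ideal.span {y * b} := le_antisymm hmI
    (sup_le hLm ((Ideal.span_singleton_le_iff_mem _).mpr (Ideal.mul_mem_mul hy hb)))
  have hshift (k : ℕ) : J * (m * I ^ k) + Ideal.span {x} * I ^ (k + 1) = L * I ^ k := by ring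
  refine ⟨fun n hn ↦ ?_, y, hy, b, hb, fun n hn ↦ ?_⟩ <;>
    obtain ⟨k, rfl⟩ := Nat.exists_eq_add_of_le' hn <;> rw [Nat.add_sub_cancel, hshift]
  · exact qlen_mul_pow_le_one hy hb hbase (maximalIdeal_mul_le_of_qlen_eq_one hone) k
  · exact Ideal.mul_pow_succ_eq_of_mul_eq hy hb hbase k

/-- in a `d`-dimensional CM local ring (`d ≥ 1`), if `I` is `m`-primary,
`x ∈ m`, `a₁, …, a_{d−1} ∈ I`, `J = (a₁,…,a_{d−1})` and `ℓ(mI/(xI + Jm)) = 1`, then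
`ℓ(mIⁿ/(JmI^{n−1} + xIⁿ)) ≤ 1` for all `n ≥ 1`; moreover there are `y ∈ m`, `b ∈ I` with
`mIⁿ = JmI^{n−1} + xIⁿ + (ybⁿ)` for all `n ≥ 1`. -/
theorem stmt8 {R : Type*} [CommRing R] [IsLocalRing R] [IsNoetherianRing R]
    (d : ℕ) (hd : 1 ≤ d)
    (hCM : IsCMLocal R) (hdim : ringKrullDim R = (d : WithBot ℕ∞))
    (I : Ideal R) (hIm : I ≤ maximalIdeal R) (hprim : ∃ k, maximalIdeal R ^ k ≤ I)
    (x : R) (hx : x ∈ maximalIdeal R)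
    (a : Fin (d - 1) → R) (ha : ∀ i, a i ∈ I)
    (hone : qlen (Ideal.span {x} * I + Ideal.span (Set.range a) * maximalIdeal R)
        (maximalIdeal R * I) = 1) :
    (∀ n : ℕ, 1 ≤ n →
      qlen (Ideal.span (Set.range a) * (maximalIdeal R * I ^ (n - 1)) +
          Ideal.span {x} * I ^ n)
        (maximalIdeal R * I ^ n) ≤ 1) ∧
    ∃ y ∈ maximalIdeal R, ∃ b ∈ I, ∀ n : ℕ, 1 ≤ n →
      maximalIdeal R * I ^ n =
        Ideal.span (Set.range a) * (maximalIdeal R * I ^ (n - 1)) +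
          Ideal.span {x} * I ^ n + Ideal.span {y * b ^ n} :=
  stmt8_general d I x hx a ha hone
end

section
/- Let (R,m) be a Cohen–Macaulay Noetherian local ring of dimension d ≥ 2 and I an m-primary ideal. Suppose x ∈ m and J = (a_1,…,a_{d−1}) with a_i ∈ I satisfy: (i) mI² = xI² + JmI and (x,J) is a joint reduction so that mI^n = xI^n + J^{n−1}mI for all n ≥ 2; and (ii) a_1,…,a_{d−1} form a regular sequence on R with (J : x) ∩ I^n = JI^{n−1} for all n. Then J ∩ mI^n = mJI^{n−1} for all n ≥ 2. (Key step: J ∩ xI^n ⊆ mJI^{n−1}, since y = xi ∈ J ∩ xI^n with i ∈ I^n gives i ∈ (J:x) ∩ I^n = JI^{n−1}.) -/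
open IsLocalRing

/-!
Write `mIⁿ = xIⁿ + J^{n-1}mI`. The summand `J^{n-1}mI` already lies in `mJI^{n-1}`, hence in `J`,
so by the modular law `J ∩ mIⁿ = (J ∩ xIⁿ) + J^{n-1}mI`. An element `xi` of `J ∩ xIⁿ` has
`i ∈ (J : x) ∩ Iⁿ = JI^{n-1}`, and `x ∈ m` puts `xi` in `mJI^{n-1}`.
-/

namespace Ideal

variable {R : Type*} [CommRing R]

theorem inf_span_singleton_mul_le (J L : Ideal R) (x : R) :
    J ⊓ (span {x} * L) ≤ span {x} * (J.colon (span {x}) ⊓ L) := by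
  rintro _ ⟨hJ, hxL⟩
  obtain ⟨i, hi, rfl⟩ := mem_span_singleton_mul.mp (show _ ∈ span {x} * L from hxL)
  have hiC : i ∈ J.colon (span {x}) := mem_colon_span_singleton.mpr (by rwa [mul_comm])
  exact mul_mem_mul (mem_span_singleton_self x) ⟨hiC, hi⟩

theorem pow_mul_mul_le_mul_mul_pow {m J I : Ideal R} (hJI : J ≤ I) {n : ℕ} (hn : n ≠ 0) :
    J ^ n * (m * I) ≤ m * J * I ^ n := by
  obtain ⟨k, rfl⟩ := Nat.exists_eq_succ_of_ne_zero hn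
  calc J ^ (k + 1) * (m * I) = m * J * (J ^ k * I) := by ring
    _ ≤ m * J * (I ^ k * I) := by gcongr
    _ = m * J * I ^ (k + 1) := by rw [pow_succ]

theorem inf_mul_pow_eq_mul_mul_pow {m J I : Ideal R} {x : R} (hx : x ∈ m) (hJI : J ≤ I)
    {n : ℕ} (hn : 2 ≤ n)
    (hred : m * I ^ n = span {x} * I ^ n + J ^ (n - 1) * (m * I))
    (hcolon : J.colon (span {x}) ⊓ I ^ n = J * I ^ (n - 1)) :
    J ⊓ (m * I ^ n) = m * J * I ^ (n - 1) := by
  have hmJ_le_J : m * J * I ^ (n - 1) ≤ J := mul_le_left.trans mul_le_right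
  have hpow_le : J ^ (n - 1) * (m * I) ≤ m * J * I ^ (n - 1) :=
    pow_mul_mul_le_mul_mul_pow hJI (by omega)
  have hx_part : J ⊓ (span {x} * I ^ n) ≤ m * J * I ^ (n - 1) :=
    calc J ⊓ (span {x} * I ^ n) ≤ span {x} * (J.colon (span {x}) ⊓ I ^ n) :=
          inf_span_singleton_mul_le J _ x
      _ = span {x} * (J * I ^ (n - 1)) := by rw [hcolon]
      _ ≤ m * (J * I ^ (n - 1)) := by gcongr; exact (span_singleton_le_iff_mem m).mpr hx
      _ = m * J * I ^ (n - 1) := (mul_assoc _ _ _).symm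
  apply le_antisymm
  · rw [hred, Submodule.add_eq_sup, ← inf_sup_assoc_of_le _ (hpow_le.trans hmJ_le_J)]
    exact sup_le hx_part hpow_le
  · refine le_inf hmJ_le_J ?_
    calc m * J * I ^ (n - 1) ≤ m * I * I ^ (n - 1) := by gcongr
      _ = m * I ^ n := by rw [mul_assoc, ← pow_succ', Nat.sub_add_cancel (by omega)]

end Ideal

theorem stmt11_general {R : Type*} [CommRing R] [IsLocalRing R]
    (d : ℕ)
    (I : Ideal R)
    (x : R) (hx : x ∈ maximalIdeal R)
    (a : Fin (d - 1) → R) (ha : ∀ i, a i ∈ I)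
    (hredn : ∀ n : ℕ, 2 ≤ n →
        maximalIdeal R * I ^ n =
          Ideal.span {x} * I ^ n +
            Ideal.span (Set.range a) ^ (n - 1) * (maximalIdeal R * I))
    (hcolon : ∀ n : ℕ, 1 ≤ n →
        (Ideal.span (Set.range a)).colon (Ideal.span {x}) ⊓ I ^ n =
          Ideal.span (Set.range a) * I ^ (n - 1)) :
    ∀ n : ℕ, 2 ≤ n →
      Ideal.span (Set.range a) ⊓ (maximalIdeal R * I ^ n) =
        maximalIdeal R * Ideal.span (Set.range a) * I ^ (n - 1) := by
  have hJI : Ideal.span (Set.range a) ≤ I := Ideal.span_le.mpr (Set.range_subset_iff.mpr ha)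
  intro n hn
  exact Ideal.inf_mul_pow_eq_mul_mul_pow hx hJI hn (hredn n hn) (hcolon n (by omega))

/-- in a CM local ring of dimension `d ≥ 2` with `I` `m`-primary, if `x ∈ m` and
`J = (a₁,…,a_{d−1})` with `aᵢ ∈ I` satisfy (i) `mI² = xI² + JmI` and `mIⁿ = xIⁿ + J^{n−1}mI`
for all `n ≥ 2`, and (ii) `a₁,…,a_{d−1}` is a regular sequence on `R` with
`(J : x) ∩ Iⁿ = JI^{n−1}` for all `n ≥ 1`, then `J ∩ mIⁿ = mJI^{n−1}` for all `n ≥ 2`. -/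
theorem stmt11 {R : Type*} [CommRing R] [IsLocalRing R] [IsNoetherianRing R]
    (d : ℕ) (hd : 2 ≤ d)
    (hCM : IsCMLocal R) (hdim : ringKrullDim R = (d : WithBot ℕ∞))
    (I : Ideal R) (hIm : I ≤ maximalIdeal R) (hprim : ∃ k, maximalIdeal R ^ k ≤ I)
    (x : R) (hx : x ∈ maximalIdeal R)
    (a : Fin (d - 1) → R) (ha : ∀ i, a i ∈ I)
    (hred2 : maximalIdeal R * I ^ 2 =
        Ideal.span {x} * I ^ 2 + Ideal.span (Set.range a) * (maximalIdeal R * I))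
    (hredn : ∀ n : ℕ, 2 ≤ n →
        maximalIdeal R * I ^ n =
          Ideal.span {x} * I ^ n +
            Ideal.span (Set.range a) ^ (n - 1) * (maximalIdeal R * I))
    (hregseq : RingTheory.Sequence.IsRegular R (List.ofFn a))
    (hcolon : ∀ n : ℕ, 1 ≤ n →
        (Ideal.span (Set.range a)).colon (Ideal.span {x}) ⊓ I ^ n =
          Ideal.span (Set.range a) * I ^ (n - 1)) :
    ∀ n : ℕ, 2 ≤ n →
      Ideal.span (Set.range a) ⊓ (maximalIdeal R * I ^ n) =
        maximalIdeal R * Ideal.span (Set.range a) * I ^ (n - 1) :=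
  stmt11_general d I x hx a ha hredn hcolon
end

section
/- Let k be an infinite field, R = k[x,y] localized at m = (x,y), and I = (x⁴, x³y, xy³, y⁴). Then I^n = m^{4n} for all n ≥ 2, μ(I) = 4, and the Hilbert series of the fiber cone is H(F(I), λ) = 1 + 4λ + Σ_{n≥2}(4n+1)λ^n = (1 + 2λ + 2λ² − λ³)/(1 − λ)²; in particular the numerator has a negative coefficient. -/
open IsLocalRing

open MvPolynomial

theorem spanX_eq_ker (k : Type*) [Field k] :
    (Ideal.span {(X 0 : MvPolynomial (Fin 2) k), X 1}) = RingHom.ker (constantCoeff) := by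
  apply le_antisymm
  · rw [Ideal.span_le]
    rintro p (rfl | rfl) <;> simp [RingHom.mem_ker]
  · intro p hp
    have h2 : ({(X 0 : MvPolynomial (Fin 2) k), X 1} : Set _) = X '' Set.univ := by
      ext q
      simp only [Set.image_univ, Set.mem_range, Set.mem_insert_iff, Set.mem_singleton_iff]
      constructor
      · rintro (rfl | rfl)
        exacts [⟨0, rfl⟩, ⟨1, rfl⟩]
      · rintro ⟨i, rfl⟩
        fin_cases i <;> simp
    rw [h2, mem_ideal_span_X_image]
    intro m hm
    have hm0 : m ≠ 0 := by
      rintro rfl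
      rw [RingHom.mem_ker] at hp
      rw [mem_support_iff] at hm
      exact hm (by simpa [constantCoeff_eq] using hp)
    rcases Finsupp.support_nonempty_iff.mpr hm0 with ⟨i, hi⟩
    exact ⟨i, trivial, Finsupp.mem_support_iff.mp hi⟩

/-- `(x, y)` is a prime ideal of `k[x,y]`. -/
instance spanX_isPrime (k : Type*) [Field k] :
    (Ideal.span {(X 0 : MvPolynomial (Fin 2) k), X 1}).IsPrime := by
  rw [spanX_eq_ker]
  exact RingHom.ker_isPrime _

/-- `R = k[x,y]` localized at the maximal ideal `(x, y)`. -/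
abbrev Rloc (k : Type*) [Field k] :=
  Localization.AtPrime (Ideal.span {(X 0 : MvPolynomial (Fin 2) k), X 1})

/-- the image of `x` in `R`. -/
noncomputable def xx (k : Type*) [Field k] : Rloc k := algebraMap (MvPolynomial (Fin 2) k) _ (X 0)

/-- the image of `y` in `R`. -/
noncomputable def yy (k : Type*) [Field k] : Rloc k := algebraMap (MvPolynomial (Fin 2) k) _ (X 1)

/-- the ideal `I = (x⁴, x³y, xy³, y⁴)` of `R`. -/
noncomputable def I13 (k : Type*) [Field k] : Ideal (Rloc k) :=
  Ideal.span {xx k ^ 4, xx k ^ 3 * yy k, xx k * yy k ^ 3, yy k ^ 4}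

/-! Write `𝔪ᵈ` as the span of the monomials `xⁱyʲ` with `i + j = d`, and `I` as the span of those
with exponents `E = {(4,0), (3,1), (1,3), (0,4)}`. The sumset `E + E` is the whole antidiagonal
`i + j = 8`, so `I² = 𝔪⁸`; together with `I ≤ 𝔪⁴` this gives `Iⁿ = 𝔪⁴ⁿ` for all `n ≥ 2`.

Distinct monomials of degree `d` are linearly independent over the residue field `k` modulo
`𝔪ᵈ⁺¹`: after replacing the coefficients by constants of `k`, the combination comes from `k[x,y]`,
where `𝔪ᵈ⁺¹` contracts to `(x,y)ᵈ⁺¹`, which has no terms of degree `d`. Hence `Iⁿ/𝔪Iⁿ` has length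
`1`, `4`, `4n + 1` for `n = 0`, `n = 1`, `n ≥ 2`, and the Hilbert series identity is a comparison
of coefficients. -/

theorem qlen_mul_eq_card {R ι : Type*} [CommRing R] [Fintype ι] {m : Ideal R} [m.IsMaximal]
    {P : Ideal R} (v : ι → R) (hP : Ideal.span (Set.range v) = P)
    (hv : ∀ r : ι → R, ∑ i, r i * v i ∈ m * P → ∀ i, r i ∈ m) :
    qlen (m * P) P = Fintype.card ι := by
  classical
  have hrange : LinearMap.range (Fintype.linearCombination R v) = P :=
    (Fintype.range_linearCombination R v).trans hP
  let g := (Submodule.comap P.subtype (m * P)).mkQ ∘ₗ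
    LinearMap.codRestrict P _ fun r => hrange ▸ LinearMap.mem_range_self _ r
  have hg : Function.Surjective g := by
    refine (Submodule.mkQ_surjective _).comp fun ⟨x, hx⟩ => ?_
    obtain ⟨r, rfl⟩ := hrange ▸ hx
    exact ⟨r, rfl⟩
  have hker : LinearMap.ker g = Submodule.pi Set.univ fun _ => m := by
    ext r
    simp only [g, LinearMap.mem_ker, LinearMap.comp_apply, Submodule.mkQ_apply,
      Submodule.Quotient.mk_eq_zero, Submodule.mem_comap, Submodule.subtype_apply,
      LinearMap.codRestrict_apply, Fintype.linearCombination_apply, smul_eq_mul,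
      Submodule.mem_pi, Set.mem_univ, true_imp_iff]
    refine ⟨hv r, fun hr => Ideal.sum_mem _ fun i _ => Ideal.mul_mem_mul (hr i) ?_⟩
    exact hP ▸ Ideal.subset_span ⟨i, rfl⟩
  let e := ((g.quotKerEquivOfSurjective hg).symm.trans (Submodule.quotEquivOfEq _ _ hker)).trans
    (Submodule.quotientPi fun _ : ι => m)
  have : IsSimpleModule R (R ⧸ m) := isSimpleModule_iff_isCoatom.mpr Ideal.IsMaximal.out
  unfold qlen modLength
  rw [← Module.coe_length, e.length_eq, Module.length_pi_of_fintype]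
  simp

open scoped Pointwise
open Finset.HasAntidiagonal (antidiagonal mem_antidiagonal)

theorem antidiagonal_add_antidiagonal (m n : ℕ) :
    antidiagonal m + antidiagonal n = antidiagonal (m + n) := by
  ext ⟨i, j⟩
  simp only [Finset.mem_add, mem_antidiagonal, Prod.exists, Prod.mk_add_mk, Prod.mk.injEq]
  constructor
  · rintro ⟨a, b, hab, c, d, hcd, rfl, rfl⟩
    omega
  · intro h
    exact ⟨min i m, m - min i m, by omega, i - min i m, j - (m - min i m), by omega, by omega,
      by omega⟩

section PairMonomial

variable {R : Type*} [CommRing R] (a b : R)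

def pairMonomial (p : ℕ × ℕ) : R := a ^ p.1 * b ^ p.2

theorem pairMonomial_add (p q : ℕ × ℕ) :
    pairMonomial a b (p + q) = pairMonomial a b p * pairMonomial a b q := by
  simp only [pairMonomial, Prod.fst_add, Prod.snd_add, pow_add]
  ring

theorem span_pairMonomial_mul_span_pairMonomial (E F : Set (ℕ × ℕ)) :
    Ideal.span (pairMonomial a b '' E) * Ideal.span (pairMonomial a b '' F) =
      Ideal.span (pairMonomial a b '' (E + F)) := by
  rw [Ideal.span_mul_span']
  congr 1
  ext z
  simp only [Set.mem_mul, Set.mem_image, Set.mem_add]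
  constructor
  · rintro ⟨_, ⟨p, hp, rfl⟩, _, ⟨q, hq, rfl⟩, rfl⟩
    exact ⟨p + q, ⟨p, hp, q, hq, rfl⟩, pairMonomial_add a b p q⟩
  · rintro ⟨_, ⟨p, hp, q, hq, rfl⟩, rfl⟩
    exact ⟨_, ⟨p, hp, rfl⟩, _, ⟨q, hq, rfl⟩, (pairMonomial_add a b p q).symm⟩

theorem span_pair_pow (n : ℕ) :
    Ideal.span {a, b} ^ n =
      Ideal.span (pairMonomial a b '' (antidiagonal n : Set (ℕ × ℕ))) := by
  induction n with
  | zero => simp [pairMonomial]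
  | succ n ih =>
    have h1 : Ideal.span {a, b} =
        Ideal.span (pairMonomial a b '' (antidiagonal 1 : Set (ℕ × ℕ))) := by
      rw [Finset.Nat.antidiagonal_succ]
      simp [pairMonomial, Set.image_insert_eq, Set.pair_comm]
    rw [pow_succ, ih, h1, span_pairMonomial_mul_span_pairMonomial, ← Finset.coe_add,
      antidiagonal_add_antidiagonal]

end PairMonomial

theorem Ideal.pow_eq_pow_of_le_of_sq_eq {R : Type*} [CommSemiring R] {I J : Ideal R}
    (hle : I ≤ J) (hsq : I ^ 2 = J ^ 2) {n : ℕ} (hn : 2 ≤ n) : I ^ n = J ^ n := by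
  induction n, hn using Nat.le_induction with
  | base => exact hsq
  | succ n hn ih =>
    refine le_antisymm (Ideal.pow_right_mono hle _) ?_
    obtain ⟨n, rfl⟩ := Nat.exists_eq_add_of_le' hn
    calc J ^ (n + 1 + 1 + 1) = J ^ (n + 1) * I ^ 2 := by rw [hsq, ← pow_add]
      _ = J ^ (n + 1) * I * I := by rw [sq, mul_assoc]
      _ ≤ J ^ (n + 1 + 1) * I := by
        gcongr
        exact (Ideal.mul_mono_right hle).trans (pow_succ J _).ge
      _ = I ^ (n + 1 + 1 + 1) := by rw [← ih, ← pow_succ]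

open PowerSeries in
theorem PowerSeries.mk_mul_one_sub_X_sq_of_eq_four_mul_add_one (μ : ℕ → ℕ) (h0 : μ 0 = 1)
    (h1 : μ 1 = 4) (hμ : ∀ n, 2 ≤ n → μ n = 4 * n + 1) :
    mk (fun n => (μ n : ℤ)) * (1 - X) ^ 2 = 1 + 2 * X + 2 * X ^ 2 - X ^ 3 := by
  -- `X ^ 1` rather than `X`, so that `coeff_mul_X_pow'` reads off every coefficient
  have hl : (1 - X : PowerSeries ℤ) ^ 2 = 1 - X ^ 1 - X ^ 1 + X ^ 2 := by ring
  have hr : (1 + 2 * X + 2 * X ^ 2 - X ^ 3 : PowerSeries ℤ) =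
      1 + X ^ 1 + X ^ 1 + X ^ 2 + X ^ 2 - X ^ 3 := by ring
  rw [hl, hr]
  ext n
  rcases n with _ | _ | _ | _ | n
  all_goals simp only [mul_sub, mul_add, mul_one, map_sub, map_add, coeff_X_pow, coeff_one,
    coeff_mul_X_pow', coeff_mk]
  all_goals norm_num [h0, h1, hμ]
  rw [show n + 1 + 1 + 1 + 1 - 2 = n + 2 by omega, hμ _ (by omega), if_neg (by omega),
    if_neg (by omega)]
  push_cast
  ring

section Rloc

variable (k : Type*) [Field k]

local notation "𝔭" => Ideal.span {(X 0 : MvPolynomial (Fin 2) k), X 1}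
local notation "𝔪" => maximalIdeal (Rloc k)
local notation "mono" => pairMonomial (xx k) (yy k)

instance spanX_isMaximal : (𝔭).IsMaximal := by
  rw [spanX_eq_ker]
  exact RingHom.ker_isMaximal_of_surjective _ fun c => ⟨C c, constantCoeff_C _ c⟩

theorem spanX_eq_idealOfVars : 𝔭 = idealOfVars (Fin 2) k := by
  congr 1
  ext
  simp [Fin.exists_fin_two, eq_comm]

theorem maximalIdeal_pow_eq_span (d : ℕ) :
    𝔪 ^ d = Ideal.span (mono '' (antidiagonal d : Set (ℕ × ℕ))) := by
  rw [← IsLocalization.AtPrime.map_eq_maximalIdeal 𝔭 (Rloc k), Ideal.map_span, Set.image_pair,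
    ← span_pair_pow]
  rfl

theorem span_pairMonomial_le_maximalIdeal_pow {d : ℕ} {E : Set (ℕ × ℕ)}
    (hE : E ⊆ antidiagonal d) : Ideal.span (mono '' E) ≤ 𝔪 ^ d := by
  rw [maximalIdeal_pow_eq_span]
  exact Ideal.span_mono (Set.image_mono hE)

theorem exists_sub_algebraMap_mem_maximalIdeal (r : Rloc k) :
    ∃ c : k, r - algebraMap k (Rloc k) c ∈ 𝔪 := by
  let e := IsLocalization.AtPrime.equivQuotMaximalIdeal 𝔭 (Rloc k)
  obtain ⟨f, hf⟩ := Ideal.Quotient.mk_surjective (e.symm (Ideal.Quotient.mk _ r))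
  refine ⟨constantCoeff f, ?_⟩
  have hr : r - algebraMap _ (Rloc k) f ∈ 𝔪 := by
    rw [← Ideal.Quotient.eq, ← IsLocalization.AtPrime.equivQuotMaximalIdeal_apply_mk 𝔭, hf,
      e.apply_symm_apply]
  have hconst : algebraMap _ (Rloc k) f - algebraMap k (Rloc k) (constantCoeff f) ∈ 𝔪 := by
    rw [IsScalarTower.algebraMap_apply k (MvPolynomial (Fin 2) k), ← map_sub,
      ← IsLocalization.AtPrime.map_eq_maximalIdeal 𝔭 (Rloc k)]
    refine Ideal.mem_map_of_mem _ ?_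
    rw [spanX_eq_ker, RingHom.mem_ker]
    simp
  simpa using add_mem hr hconst

theorem algebraMap_monomial_eq_mul_pairMonomial (p : ℕ × ℕ) (c : k) :
    algebraMap _ (Rloc k) (monomial (Finsupp.single (0 : Fin 2) p.1 + Finsupp.single 1 p.2) c) =
      algebraMap k (Rloc k) c * mono p := by
  rw [IsScalarTower.algebraMap_apply k (MvPolynomial (Fin 2) k), pairMonomial, xx, yy,
    ← map_pow, ← map_pow, ← map_mul, ← map_mul, X_pow_eq_monomial, X_pow_eq_monomial,
    monomial_mul, one_mul, MvPolynomial.algebraMap_eq, C_mul_monomial, mul_one]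

theorem mem_maximalIdeal_of_sum_mul_pairMonomial_mem {ι : Type*} [Fintype ι] {d : ℕ}
    {e : ι → ℕ × ℕ} (he : Function.Injective e) (hd : ∀ i, e i ∈ antidiagonal d)
    {r : ι → Rloc k} (hr : ∑ i, r i * mono (e i) ∈ 𝔪 ^ (d + 1)) (i : ι) : r i ∈ 𝔪 := by
  classical
  choose c hc using exists_sub_algebraMap_mem_maximalIdeal k
  let s : ℕ × ℕ → Fin 2 →₀ ℕ := fun p => Finsupp.single 0 p.1 + Finsupp.single 1 p.2
  have hs : Function.Injective s := fun p q h => Prod.ext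
    (by simpa [s] using DFunLike.congr_fun h 0) (by simpa [s] using DFunLike.congr_fun h 1)
  let f := ∑ j, monomial (s (e j)) (c (r j))
  have hf : f ∈ idealOfVars (Fin 2) k ^ (d + 1) := by
    rw [← spanX_eq_idealOfVars, ← IsLocalization.AtPrime.under_maximalIdeal_pow 𝔭 (Rloc k),
      Ideal.mem_comap, map_sum]
    have hrest : ∑ j, (r j - algebraMap k _ (c (r j))) * mono (e j) ∈ 𝔪 ^ (d + 1) :=
      Ideal.sum_mem _ fun j _ => pow_succ' 𝔪 d ▸ Ideal.mul_mem_mul (hc (r j))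
        (span_pairMonomial_le_maximalIdeal_pow k (E := {e j}) (by simpa using hd j)
          (Ideal.subset_span ⟨e j, rfl, rfl⟩))
    simpa [f, s, algebraMap_monomial_eq_mul_pairMonomial, sub_mul] using sub_mem hr hrest
  have hcoeff := (mem_pow_idealOfVars_iff' _ f).mp hf (s (e i)) (by
    simp only [s, map_add, Finsupp.degree_single, (mem_antidiagonal.mp (hd i))]
    omega)
  simp only [f, coeff_sum, coeff_monomial, hs.eq_iff, he.eq_iff, Finset.sum_ite_eq',
    Finset.mem_univ, if_true] at hcoeff
  simpa [hcoeff] using hc (r i)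

theorem qlen_span_pairMonomial {d : ℕ} (E : Finset (ℕ × ℕ)) (hE : E ⊆ antidiagonal d) :
    qlen (𝔪 * Ideal.span (mono '' E)) (Ideal.span (mono '' E)) = (E.card : WithBot ℕ∞) := by
  rw [← Fintype.card_coe E]
  refine qlen_mul_eq_card (fun p : E => mono p) (by simp [Set.image_eq_range]) fun r hr => ?_
  have hle : 𝔪 * Ideal.span (mono '' E) ≤ 𝔪 ^ (d + 1) := pow_succ' 𝔪 d ▸
    Ideal.mul_mono_right (span_pairMonomial_le_maximalIdeal_pow k (Finset.coe_subset.mpr hE))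
  exact mem_maximalIdeal_of_sum_mul_pairMonomial_mem k Subtype.val_injective (fun p => hE p.2)
    (hle hr)

def I13Exponents : Finset (ℕ × ℕ) := {(4, 0), (3, 1), (1, 3), (0, 4)}

theorem I13_eq_span : I13 k = Ideal.span (mono '' I13Exponents) := by
  simp [I13, I13Exponents, pairMonomial, Set.image_insert_eq]

theorem I13_le_maximalIdeal_pow : I13 k ≤ 𝔪 ^ 4 := by
  rw [I13_eq_span]
  exact span_pairMonomial_le_maximalIdeal_pow k (Finset.coe_subset.mpr (by decide))

theorem I13_sq : I13 k ^ 2 = 𝔪 ^ 8 := by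
  rw [I13_eq_span, sq, span_pairMonomial_mul_span_pairMonomial, ← Finset.coe_add,
    show I13Exponents + I13Exponents = antidiagonal 8 by decide, maximalIdeal_pow_eq_span]

theorem I13_pow {n : ℕ} (hn : 2 ≤ n) : I13 k ^ n = 𝔪 ^ (4 * n) := by
  rw [pow_mul]
  exact Ideal.pow_eq_pow_of_le_of_sq_eq (I13_le_maximalIdeal_pow k) (by rw [I13_sq, ← pow_mul]) hn

theorem qlen_I13_pow_zero : qlen (𝔪 * I13 k ^ 0) (I13 k ^ 0) = (1 : ℕ) := by
  have h : I13 k ^ 0 = Ideal.span (mono '' ({(0, 0)} : Finset (ℕ × ℕ))) := by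
    simp [pairMonomial]
  rw [h, qlen_span_pairMonomial k _ (d := 0) (by decide), Finset.card_singleton]

theorem qlen_I13 : qlen (𝔪 * I13 k ^ 1) (I13 k ^ 1) = (4 : ℕ) := by
  rw [pow_one, I13_eq_span, qlen_span_pairMonomial k _ (d := 4) (by decide)]
  rfl

theorem qlen_I13_pow {n : ℕ} (hn : 2 ≤ n) :
    qlen (𝔪 * I13 k ^ n) (I13 k ^ n) = (4 * n + 1 : ℕ) := by
  rw [I13_pow k hn, maximalIdeal_pow_eq_span, qlen_span_pairMonomial k _ subset_rfl,
    Finset.Nat.card_antidiagonal]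

end Rloc

open PowerSeries in
theorem stmt13_general {k : Type*} [Field k]
    (μ : ℕ → ℕ)
    (hμ : ∀ n : ℕ, qlen (IsLocalRing.maximalIdeal (Rloc k) * I13 k ^ n) (I13 k ^ n) =
        (μ n : WithBot ℕ∞)) :
    (∀ n : ℕ, 2 ≤ n → I13 k ^ n = IsLocalRing.maximalIdeal (Rloc k) ^ (4 * n)) ∧
    μ 1 = 4 ∧
    (∀ n : ℕ, 2 ≤ n → μ n = 4 * n + 1) ∧
    PowerSeries.mk (fun n => (μ n : ℤ)) * (1 - PowerSeries.X) ^ 2 =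
      1 + 2 * PowerSeries.X + 2 * PowerSeries.X ^ 2 - PowerSeries.X ^ 3 := by
  have hμ_eq {n d : ℕ} (h : qlen (maximalIdeal (Rloc k) * I13 k ^ n) (I13 k ^ n) = d) :
      μ n = d := by exact_mod_cast (hμ n).symm.trans h
  have h0 := hμ_eq (qlen_I13_pow_zero k)
  have h1 := hμ_eq (qlen_I13 k)
  have hn : ∀ n, 2 ≤ n → μ n = 4 * n + 1 := fun n hn => hμ_eq (qlen_I13_pow k hn)
  exact ⟨fun n hn => I13_pow k hn, h1, hn,
    PowerSeries.mk_mul_one_sub_X_sq_of_eq_four_mul_add_one μ h0 h1 hn⟩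

open PowerSeries in
/-- for `k` an infinite field, `R = k[x,y]` localized at `m = (x,y)` and
`I = (x⁴, x³y, xy³, y⁴)`, one has `Iⁿ = m^{4n}` for all `n ≥ 2`, `μ(I) = 4`, and
`H(F(I),λ) = 1 + 4λ + Σ_{n≥2}(4n+1)λⁿ = (1 + 2λ + 2λ² − λ³)/(1 − λ)²`
(whose numerator has a negative coefficient). -/
theorem stmt13 {k : Type*} [Field k] [Infinite k]
    (μ : ℕ → ℕ)
    (hμ : ∀ n : ℕ, qlen (IsLocalRing.maximalIdeal (Rloc k) * I13 k ^ n) (I13 k ^ n) =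
        (μ n : WithBot ℕ∞)) :
    (∀ n : ℕ, 2 ≤ n → I13 k ^ n = IsLocalRing.maximalIdeal (Rloc k) ^ (4 * n)) ∧
    μ 1 = 4 ∧
    (∀ n : ℕ, 2 ≤ n → μ n = 4 * n + 1) ∧
    PowerSeries.mk (fun n => (μ n : ℤ)) * (1 - PowerSeries.X) ^ 2 =
      1 + 2 * PowerSeries.X + 2 * PowerSeries.X ^ 2 - PowerSeries.X ^ 3 :=
  stmt13_general μ hμ
end
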